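/- arXiv:1203.5457 — 3 statements merged into one kernel-verified Lean document; each statement's English description precedes it below -/
import Mathlib

section
/- The saddle element X := v_{{1,2},{3,4}} + v_{{1,4},{2,3}} of P_4 is negligible: ⟨X, y⟩ = 0 for every y ∈ P_4. -/
open Finset LaurentPolynomial

/-- The Laurent polynomial ring `ℤ[q, q⁻¹]`. -/
abbrev R : Type := LaurentPolynomial ℤ

/-- `M` is a non-crossing partial matching of the `n` points `0, …, n-1`,
taken in circular order on the boundary of a disk: a set of chords `(a, b)` with `a < b`
(each recording the two-element subset `{a, b}`), pairwise disjoint, and with no two chords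
`{a, b}`, `{c, d}` satisfying `a < c < b < d`. -/
def IsNCPM (n : ℕ) (M : Finset (Fin n × Fin n)) : Prop :=
  (∀ p ∈ M, p.1 < p.2) ∧
    (∀ p ∈ M, ∀ q ∈ M, p ≠ q → p.1 ≠ q.1 ∧ p.1 ≠ q.2 ∧ p.2 ≠ q.1 ∧ p.2 ≠ q.2) ∧
    (∀ p ∈ M, ∀ q ∈ M, ¬(p.1 < q.1 ∧ q.1 < p.2 ∧ p.2 < q.2))

instance (n : ℕ) : DecidablePred (IsNCPM n) := fun M =>
  have h1 : Decidable (∀ p ∈ M, p.1 < p.2) := inferInstance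
  have h2 : Decidable
      (∀ p ∈ M, ∀ q ∈ M, p ≠ q → p.1 ≠ q.1 ∧ p.1 ≠ q.2 ∧ p.2 ≠ q.1 ∧ p.2 ≠ q.2) :=
    inferInstance
  have h3 : Decidable (∀ p ∈ M, ∀ q ∈ M, ¬(p.1 < q.1 ∧ q.1 < p.2 ∧ p.2 < q.2)) :=
    inferInstance
  @instDecidableAnd _ _ h1 (@instDecidableAnd _ _ h2 h3)

/-- The type of non-crossing partial matchings of `[n]`. -/
abbrev NCPM (n : ℕ) : Type := {M : Finset (Fin n × Fin n) // IsNCPM n M}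

/-- `Pn n`: the free `ℤ[q,q⁻¹]`-module on the non-crossing partial matchings of `[n]`,
modeling the planar-algebra space of crossingless diagrams in a disk with `n` boundary
points. -/
abbrev Pn (n : ℕ) : Type := NCPM n →₀ R

/-- `e M`: the basis diagram of `Pn n` corresponding to the matching `M`. -/
noncomputable def e {n : ℕ} (M : NCPM n) : Pn n := Finsupp.single M 1

theorem IsNCPM.subset {n : ℕ} {M A : Finset (Fin n × Fin n)} (hM : IsNCPM n M) (h : A ⊆ M) :
    IsNCPM n A :=
  ⟨fun p hp => hM.1 p (h hp), fun p hp q hq hpq => hM.2.1 p (h hp) q (h hq) hpq,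
    fun p hp q hq => hM.2.2 p (h hp) q (h hq)⟩

/-- The dotted element `v_M := ∑_{N ⊆ M} (−1)^{|M|−|N|} e_N`, the sum over all subsets `N`
of the set of chords of `M`. -/
noncomputable def dotted {n : ℕ} (M : NCPM n) : Pn n :=
  ∑ A ∈ M.1.powerset.attach,
    ((-1 : R) ^ (M.1.card - A.1.card)) • e ⟨A.1, M.2.subset (Finset.mem_powerset.mp A.2)⟩

/-- The matched set of a set of chords: the union of its chords. -/
def matchedSet {V : Type*} [DecidableEq V] (E : Finset (V × V)) : Finset V :=
  E.biUnion fun p => {p.1, p.2}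

/-- The multigraph on `[n]` whose edges are the chords of `M` together with the chords of `N`
(a chord occurring in both counting as a double edge, forming a 2-cycle) contains a cycle.
For `M`, `N` partial matchings this happens exactly when some nonempty `A ⊆ M` and
nonempty `B ⊆ N` have the same matched set. -/
def HasCycle {n : ℕ} (M N : Finset (Fin n × Fin n)) : Prop :=
  ∃ A ⊆ M, A.Nonempty ∧ ∃ B ⊆ N, B.Nonempty ∧ matchedSet A = matchedSet B

instance {n : ℕ} (M N : Finset (Fin n × Fin n)) : Decidable (HasCycle M N) := by
  unfold HasCycle; infer_instance

/-- The bilinear form on `Pn n` with `⟨e_M, e_N⟩ = 1` if gluing `M` to the mirror image of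
`N` produces no closed loop, and `⟨e_M, e_N⟩ = 0` otherwise. -/
noncomputable def pairing {n : ℕ} (x y : Pn n) : R :=
  ∑ M ∈ x.support, ∑ N ∈ y.support, x M * y N * (if HasCycle M.1 N.1 then 0 else 1)

/-! Auxiliary lemmas -/

/-- Powerset-bounded version of `HasCycle`, whose decidability instance evaluates. -/
def HasCycle' {n : ℕ} (M N : Finset (Fin n × Fin n)) : Prop :=
  ∃ A ∈ M.powerset, A.Nonempty ∧ ∃ B ∈ N.powerset, B.Nonempty ∧ matchedSet A = matchedSet B

instance {n : ℕ} (M N : Finset (Fin n × Fin n)) : Decidable (HasCycle' M N) := by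
  unfold HasCycle'; infer_instance

lemma hc_iff {n : ℕ} (M N : Finset (Fin n × Fin n)) : HasCycle M N ↔ HasCycle' M N := by
  simp [HasCycle, HasCycle', Finset.mem_powerset]

set_option maxRecDepth 4000 in
lemma single_classify : ∀ p : Fin 4 × Fin 4, p.1 < p.2 →
    (({p} : Finset (Fin 4 × Fin 4)) = {(0,1)} ∨ ({p} : Finset (Fin 4 × Fin 4)) = {(0,2)} ∨
     ({p} : Finset (Fin 4 × Fin 4)) = {(0,3)} ∨ ({p} : Finset (Fin 4 × Fin 4)) = {(1,2)} ∨
     ({p} : Finset (Fin 4 × Fin 4)) = {(1,3)} ∨ ({p} : Finset (Fin 4 × Fin 4)) = {(2,3)}) := by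
  decide

set_option maxRecDepth 40000 in
set_option maxHeartbeats 2000000 in
lemma pair_classify : ∀ p q : Fin 4 × Fin 4, p.1 < p.2 → q.1 < q.2 →
    (p.1 ≠ q.1 ∧ p.1 ≠ q.2 ∧ p.2 ≠ q.1 ∧ p.2 ≠ q.2) →
    ¬(p.1 < q.1 ∧ q.1 < p.2 ∧ p.2 < q.2) → ¬(q.1 < p.1 ∧ p.1 < q.2 ∧ q.2 < p.2) →
    (({p, q} : Finset (Fin 4 × Fin 4)) = {(0,1),(2,3)} ∨
     ({p, q} : Finset (Fin 4 × Fin 4)) = {(0,3),(1,2)}) := by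
  decide

lemma card_matchedSet {N : Finset (Fin 4 × Fin 4)} (hN : IsNCPM 4 N) :
    (matchedSet N).card = 2 * N.card := by
  rw [matchedSet, Finset.card_biUnion]
  · rw [Finset.sum_congr rfl (g := fun _ => 2) (fun p hp => ?_)]
    · rw [Finset.sum_const, smul_eq_mul, mul_comm]
    · rw [Finset.card_insert_of_notMem (by simp [(hN.1 p hp).ne]), Finset.card_singleton]
  · intro x hx y hy hxy
    obtain ⟨h1, h2, h3, h4⟩ := hN.2.1 x hx y hy hxy
    rw [Function.onFun, Finset.disjoint_left]
    intro a ha hb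
    simp only [Finset.mem_insert, Finset.mem_singleton] at ha hb
    rcases ha with rfl | rfl <;> rcases hb with h | h <;> simp_all

lemma classify (N : Finset (Fin 4 × Fin 4)) (hN : IsNCPM 4 N) :
    N = ∅ ∨ N = {(0,1)} ∨ N = {(0,2)} ∨ N = {(0,3)} ∨ N = {(1,2)} ∨ N = {(1,3)} ∨
      N = {(2,3)} ∨ N = {(0,1),(2,3)} ∨ N = {(0,3),(1,2)} := by
  have hms := card_matchedSet hN
  have hle : (matchedSet N).card ≤ 4 := by
    have := Finset.card_le_univ (matchedSet N)
    simpa using this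
  have hc : N.card = 0 ∨ N.card = 1 ∨ N.card = 2 := by omega
  rcases hc with h | h | h
  · exact Or.inl (Finset.card_eq_zero.mp h)
  · obtain ⟨p, rfl⟩ := Finset.card_eq_one.mp h
    have h1 := hN.1 p (Finset.mem_singleton_self p)
    have := single_classify p h1
    tauto
  · obtain ⟨p, q, hpq, rfl⟩ := Finset.card_eq_two.mp h
    have hp : p ∈ ({p, q} : Finset (Fin 4 × Fin 4)) := by simp
    have hq : q ∈ ({p, q} : Finset (Fin 4 × Fin 4)) := by simp
    have := pair_classify p q (hN.1 p hp) (hN.1 q hq) (hN.2.1 p hp q hq hpq)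
      (hN.2.2 p hp q hq) (hN.2.2 q hq p hp)
    tauto

set_option maxRecDepth 40000 in
set_option maxHeartbeats 2000000 in
lemma keyZ (N : Finset (Fin 4 × Fin 4)) (hN : IsNCPM 4 N) :
    2 * (if HasCycle (∅ : Finset (Fin 4 × Fin 4)) N then (0:ℤ) else 1)
    + (if HasCycle {((0:Fin 4),(1:Fin 4)), (2,3)} N then 0 else 1)
    + (if HasCycle {((0:Fin 4),(3:Fin 4)), (1,2)} N then 0 else 1)
    - (if HasCycle {((0:Fin 4),(1:Fin 4))} N then 0 else 1)
    - (if HasCycle {((2:Fin 4),(3:Fin 4))} N then 0 else 1)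
    - (if HasCycle {((0:Fin 4),(3:Fin 4))} N then 0 else 1)
    - (if HasCycle {((1:Fin 4),(2:Fin 4))} N then 0 else 1) = 0 := by
  simp only [hc_iff]
  rcases classify N hN with rfl | rfl | rfl | rfl | rfl | rfl | rfl | rfl | rfl <;> decide

lemma keyR (N : Finset (Fin 4 × Fin 4)) (hN : IsNCPM 4 N) :
    2 * (if HasCycle (∅ : Finset (Fin 4 × Fin 4)) N then (0:R) else 1)
    + (if HasCycle {((0:Fin 4),(1:Fin 4)), (2,3)} N then 0 else 1)
    + (if HasCycle {((0:Fin 4),(3:Fin 4)), (1,2)} N then 0 else 1)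
    - (if HasCycle {((0:Fin 4),(1:Fin 4))} N then 0 else 1)
    - (if HasCycle {((2:Fin 4),(3:Fin 4))} N then 0 else 1)
    - (if HasCycle {((0:Fin 4),(3:Fin 4))} N then 0 else 1)
    - (if HasCycle {((1:Fin 4),(2:Fin 4))} N then 0 else 1) = 0 := by
  have h := keyZ N hN
  have cast_ite : ∀ P : Prop, ∀ _ : Decidable P,
      (if P then (0:R) else 1) = (((if P then (0:ℤ) else 1) : ℤ) : R) := by
    intro P hP
    split <;> simp
  rw [cast_ite _ _, cast_ite _ _, cast_ite _ _, cast_ite _ _, cast_ite _ _, cast_ite _ _,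
    cast_ite _ _]
  exact_mod_cast congrArg (fun z : ℤ => (z : R)) h

/-- The "column" function: pairing of a single diagram basis vector against `y`. -/
noncomputable def gfun (y : Pn 4) (A : Finset (Fin 4 × Fin 4)) : R :=
  ∑ N ∈ y.support, y N * (if HasCycle A N.1 then 0 else 1)

/-- `pairing · y` as an additive monoid hom. -/
noncomputable def Phi (y : Pn 4) : Pn 4 →+ R :=
  Finsupp.liftAddHom fun M => AddMonoidHom.mulRight (gfun y M.1)

lemma pairing_eq (x y : Pn 4) : pairing x y = Phi y x := by
  rw [Phi, Finsupp.liftAddHom_apply, Finsupp.sum, pairing]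
  exact Finset.sum_congr rfl fun M _ => by
    rw [AddMonoidHom.mulRight_apply, gfun, Finset.mul_sum]
    exact Finset.sum_congr rfl fun N _ => (mul_assoc _ _ _)

lemma Phi_smul_e (y : Pn 4) (M : NCPM 4) (c : R) : Phi y (c • e M) = c * gfun y M.1 := by
  rw [e, Finsupp.smul_single', mul_one, Phi, Finsupp.liftAddHom_apply_single,
    AddMonoidHom.mulRight_apply]

lemma gcomb (y : Pn 4) :
    2 * gfun y ∅ + gfun y {(0,1),(2,3)} + gfun y {(0,3),(1,2)} - gfun y {(0,1)}
      - gfun y {(2,3)} - gfun y {(0,3)} - gfun y {(1,2)} = 0 := by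
  unfold gfun
  simp only [Finset.mul_sum, ← Finset.sum_add_distrib, ← Finset.sum_sub_distrib]
  refine Finset.sum_eq_zero fun N _ => ?_
  have h := keyR N.1 N.2
  linear_combination (y N) * h

lemma sum_powerset_singleton {β : Type*} [AddCommMonoid β] (a : Fin 4 × Fin 4)
    (f : Finset (Fin 4 × Fin 4) → β) :
    ∑ t ∈ ({a} : Finset (Fin 4 × Fin 4)).powerset, f t = f ∅ + f {a} := by
  rw [← insert_empty_eq, Finset.sum_powerset_insert (Finset.notMem_empty a),
    Finset.powerset_empty, Finset.sum_singleton, Finset.sum_singleton,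
    insert_empty_eq]

/-- The saddle element `X = v_{{1,2},{3,4}} + v_{{1,4},{2,3}}` of `P₄`
(0-indexed: `v_{{01},{23}} + v_{{03},{12}}`) is negligible: `⟨X, y⟩ = 0` for all `y ∈ P₄`. -/
theorem saddle_negligible (y : Pn 4) :
    pairing
      (dotted ⟨{(0, 1), (2, 3)}, by decide⟩ + dotted ⟨{(0, 3), (1, 2)}, by decide⟩) y
      = 0 := by
  rw [pairing_eq, map_add]
  simp only [dotted, map_sum, Phi_smul_e]
  rw [Finset.sum_attach _ (fun A : Finset (Fin 4 × Fin 4) =>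
        ((-1 : R)) ^ (({((0:Fin 4),(1:Fin 4)), (2,3)} : Finset (Fin 4 × Fin 4)).card - A.card)
          * gfun y A),
      Finset.sum_attach _ (fun A : Finset (Fin 4 × Fin 4) =>
        ((-1 : R)) ^ (({((0:Fin 4),(3:Fin 4)), (1,2)} : Finset (Fin 4 × Fin 4)).card - A.card)
          * gfun y A)]
  rw [Finset.sum_powerset_insert
        (show ((0:Fin 4),(1:Fin 4)) ∉ ({(2,3)} : Finset (Fin 4 × Fin 4)) by decide),
      Finset.sum_powerset_insert
        (show ((0:Fin 4),(3:Fin 4)) ∉ ({(1,2)} : Finset (Fin 4 × Fin 4)) by decide),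
      sum_powerset_singleton, sum_powerset_singleton, sum_powerset_singleton,
      sum_powerset_singleton]
  simp only [insert_empty_eq,
    show ({((0:Fin 4),(1:Fin 4)), (2,3)} : Finset (Fin 4 × Fin 4)).card = 2 by decide,
    show ({((0:Fin 4),(3:Fin 4)), (1,2)} : Finset (Fin 4 × Fin 4)).card = 2 by decide,
    show (∅ : Finset (Fin 4 × Fin 4)).card = 0 from rfl,
    show ({((2:Fin 4),(3:Fin 4))} : Finset (Fin 4 × Fin 4)).card = 1 by decide,
    show ({((1:Fin 4),(2:Fin 4))} : Finset (Fin 4 × Fin 4)).card = 1 by decide,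
    show ({((0:Fin 4),(1:Fin 4))} : Finset (Fin 4 × Fin 4)).card = 1 by decide,
    show ({((0:Fin 4),(3:Fin 4))} : Finset (Fin 4 × Fin 4)).card = 1 by decide]
  norm_num
  linear_combination gcomb y
end

section
/- Let S ⊆ [n] with |S| = 2k, and let M, M′, M″ be non-crossing perfect matchings of S. Then c(M,M′) + c(M′,M″) ≡ c(M,M″) + k (mod 2). Consequently, fixing any non-crossing perfect matching M₀ of S and setting ε_M := (−1)^{c(M,M₀)}, one has (−1)^{c(M,M′)} = (−1)^k · ε_M · ε_{M′} for all non-crossing perfect matchings M, M′ of S. (This is the combinatorial content of the paper's claim that equivalent dotted basis diagrams become equal up to sign in the quotient planar algebra P′.) -/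
open Finset LaurentPolynomial

open scoped Classical in
/-- `cyclesCount M N`: the number of cycles of the multigraph whose edges are the chords of
`M` together with the chords of `N`.  Each cycle corresponds to a minimal nonempty set
`A ⊆ M` whose matched set is also the matched set of some `B ⊆ N`, and we count these. -/
noncomputable def cyclesCount {n : ℕ} (M N : Finset (Fin n × Fin n)) : ℕ :=
  (M.powerset.filter fun A =>
      A.Nonempty ∧ (∃ B ⊆ N, matchedSet A = matchedSet B) ∧
        ∀ A' ⊂ A, A'.Nonempty → ¬∃ B ⊆ N, matchedSet A' = matchedSet B).card

section AuxDev
section Basics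

variable {n : ℕ}

lemma isNCPM_subset {A B : Finset (Fin n × Fin n)} (h : IsNCPM n A) (hs : B ⊆ A) :
    IsNCPM n B :=
  ⟨fun p hp => h.1 p (hs hp), fun p hp q hq => h.2.1 p (hs hp) q (hs hq),
   fun p hp q hq => h.2.2 p (hs hp) q (hs hq)⟩

lemma mem_matchedSet {E : Finset (Fin n × Fin n)} {x : Fin n} :
    x ∈ matchedSet E ↔ ∃ p ∈ E, x = p.1 ∨ x = p.2 := by
  simp [matchedSet, mem_biUnion, or_comm, eq_comm]

lemma endpoint_mem_matchedSet {E : Finset (Fin n × Fin n)} {p : Fin n × Fin n}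
    (hp : p ∈ E) {x : Fin n} (hx : x = p.1 ∨ x = p.2) : x ∈ matchedSet E :=
  mem_matchedSet.2 ⟨p, hp, hx⟩

lemma eq_of_shared_endpoint {A : Finset (Fin n × Fin n)} (hA : IsNCPM n A)
    {p q : Fin n × Fin n} (hp : p ∈ A) (hq : q ∈ A) {x : Fin n}
    (hxp : x = p.1 ∨ x = p.2) (hxq : x = q.1 ∨ x = q.2) : p = q := by
  by_contra hne
  obtain ⟨h1, h2, h3, h4⟩ := hA.2.1 p hp q hq hne
  rcases hxp with rfl | rfl <;> rcases hxq with h | h <;> simp_all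

lemma mem_of_endpoint_mem {A X : Finset (Fin n × Fin n)} (hA : IsNCPM n A)
    (hX : X ⊆ A) {p : Fin n × Fin n} (hp : p ∈ A) {x : Fin n}
    (hx : x = p.1 ∨ x = p.2) (hmx : x ∈ matchedSet X) : p ∈ X := by
  obtain ⟨q, hq, hxq⟩ := mem_matchedSet.1 hmx
  have : p = q := eq_of_shared_endpoint hA hp (hX hq) hx hxq
  exact this ▸ hq

lemma matchedSet_union {E F : Finset (Fin n × Fin n)} :
    matchedSet (E ∪ F) = matchedSet E ∪ matchedSet F := by
  ext x; simp only [matchedSet, mem_biUnion, mem_union]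
  constructor
  · rintro ⟨p, hp | hp, hx⟩
    exacts [Or.inl ⟨p, hp, hx⟩, Or.inr ⟨p, hp, hx⟩]
  · rintro (⟨p, hp, hx⟩ | ⟨p, hp, hx⟩)
    exacts [⟨p, Or.inl hp, hx⟩, ⟨p, Or.inr hp, hx⟩]

lemma matchedSet_inter {A X Y : Finset (Fin n × Fin n)} (hA : IsNCPM n A)
    (hX : X ⊆ A) (hY : Y ⊆ A) : matchedSet (X ∩ Y) = matchedSet X ∩ matchedSet Y := by
  ext x
  simp only [mem_inter, mem_matchedSet]
  constructor
  · rintro ⟨p, hp, hx⟩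
    exact ⟨⟨p, hp.1, hx⟩, ⟨p, hp.2, hx⟩⟩
  · rintro ⟨⟨p, hp, hx⟩, ⟨q, hq, hxq⟩⟩
    have heq : p = q := eq_of_shared_endpoint hA (hX hp) (hY hq) hx hxq
    exact ⟨p, ⟨hp, heq ▸ hq⟩, hx⟩

lemma matchedSet_sdiff {A X Y : Finset (Fin n × Fin n)} (hA : IsNCPM n A)
    (hX : X ⊆ A) (hY : Y ⊆ A) : matchedSet (X \ Y) = matchedSet X \ matchedSet Y := by
  ext x
  simp only [mem_sdiff, mem_matchedSet]
  constructor
  · rintro ⟨p, hp, hx⟩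
    obtain ⟨hpX, hpY⟩ := hp
    refine ⟨⟨p, hpX, hx⟩, ?_⟩
    rintro ⟨q, hq, hxq⟩
    exact hpY ((eq_of_shared_endpoint hA (hX hpX) (hY hq) hx hxq) ▸ hq)
  · rintro ⟨⟨p, hp, hx⟩, hnot⟩
    refine ⟨p, ⟨hp, fun hpY => hnot ⟨p, hpY, hx⟩⟩, hx⟩

lemma matchedSet_subset {E F : Finset (Fin n × Fin n)} (h : E ⊆ F) :
    matchedSet E ⊆ matchedSet F := fun x hx => by
  obtain ⟨p, hp, hxp⟩ := mem_matchedSet.1 hx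
  exact endpoint_mem_matchedSet (h hp) hxp

lemma matchedSet_card {A X : Finset (Fin n × Fin n)} (hA : IsNCPM n A) (hX : X ⊆ A) :
    (matchedSet X).card = 2 * X.card := by
  rw [matchedSet, card_biUnion]
  · rw [Finset.sum_congr rfl (fun p hp => ?_), Finset.sum_const, smul_eq_mul, mul_comm]
    have : p.1 ≠ p.2 := ne_of_lt (hA.1 p (hX hp))
    simp [this]
  · intro p hp q hq hne
    obtain ⟨h1, h2, h3, h4⟩ := hA.2.1 p (hX hp) q (hX hq) hne
    simp only [Finset.disjoint_insert_left, Finset.disjoint_singleton_left,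
      Finset.mem_insert, Finset.mem_singleton]
    tauto

end Basics

section Adm

variable {n : ℕ}

/-- `Adm B X`: the matched set of `X` is also the matched set of a subset of `B`. -/
def Adm (B X : Finset (Fin n × Fin n)) : Prop :=
  ∃ B₀ ⊆ B, matchedSet X = matchedSet B₀

open scoped Classical in
lemma cyclesCount_eq (A B : Finset (Fin n × Fin n)) :
    cyclesCount A B = (A.powerset.filter fun C =>
      C.Nonempty ∧ Adm B C ∧ ∀ C' ⊂ C, C'.Nonempty → ¬Adm B C').card := by
  unfold cyclesCount Adm
  congr

open scoped Classical in
lemma mem_cfilter {A B C : Finset (Fin n × Fin n)} :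
    C ∈ (A.powerset.filter fun C =>
      C.Nonempty ∧ Adm B C ∧ ∀ C' ⊂ C, C'.Nonempty → ¬Adm B C') ↔
    (C ⊆ A ∧ C.Nonempty ∧ Adm B C ∧ ∀ C' ⊂ C, C'.Nonempty → ¬Adm B C') := by
  rw [Finset.mem_filter, Finset.mem_powerset]

lemma adm_inter {A B X Y : Finset (Fin n × Fin n)} (hA : IsNCPM n A) (hB : IsNCPM n B)
    (hX : X ⊆ A) (hY : Y ⊆ A) (aX : Adm B X) (aY : Adm B Y) : Adm B (X ∩ Y) := by
  obtain ⟨BX, hBX, hmX⟩ := aX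
  obtain ⟨BY, hBY, hmY⟩ := aY
  exact ⟨BX ∩ BY, (Finset.inter_subset_left).trans hBX,
    by rw [matchedSet_inter hA hX hY, matchedSet_inter hB hBX hBY, hmX, hmY]⟩

lemma adm_sdiff {A B X Y : Finset (Fin n × Fin n)} (hA : IsNCPM n A) (hB : IsNCPM n B)
    (hX : X ⊆ A) (hY : Y ⊆ A) (aX : Adm B X) (aY : Adm B Y) : Adm B (X \ Y) := by
  obtain ⟨BX, hBX, hmX⟩ := aX
  obtain ⟨BY, hBY, hmY⟩ := aY
  refine ⟨BX \ (BY ∩ BX), (Finset.sdiff_subset).trans hBX, ?_⟩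
  rw [matchedSet_sdiff hA hX hY, matchedSet_sdiff hB hBX ((Finset.inter_subset_right).trans hBX),
    matchedSet_inter hB hBY hBX, hmX, hmY]
  rw [Finset.sdiff_inter_self_right]

/-- Every chord of `A` lies in some minimal admissible set. -/
lemma min_exists {A B : Finset (Fin n × Fin n)} (hA : IsNCPM n A) (hB : IsNCPM n B)
    (hms : matchedSet A = matchedSet B) {p : Fin n × Fin n} (hp : p ∈ A) :
    ∃ C, (C ⊆ A ∧ C.Nonempty ∧ Adm B C ∧ ∀ C' ⊂ C, C'.Nonempty → ¬Adm B C') ∧ p ∈ C := by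
  classical
  set 𝒮 := A.powerset.filter (fun X => p ∈ X ∧ Adm B X) with h𝒮
  have hA𝒮 : A ∈ 𝒮 := by
    rw [h𝒮, Finset.mem_filter, Finset.mem_powerset]
    exact ⟨le_refl _, hp, ⟨B, le_refl _, hms⟩⟩
  obtain ⟨C, hC𝒮, hCmin⟩ := Finset.exists_min_image 𝒮 Finset.card ⟨A, hA𝒮⟩
  rw [h𝒮, Finset.mem_filter, Finset.mem_powerset] at hC𝒮
  obtain ⟨hCA, hpC, hCadm⟩ := hC𝒮
  refine ⟨C, ⟨hCA, ⟨p, hpC⟩, hCadm, ?_⟩, hpC⟩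
  intro C' hC' hC'ne hC'adm
  have hC'A : C' ⊆ A := (subset_of_ssubset hC').trans hCA
  by_cases hpC' : p ∈ C'
  · have : C' ∈ 𝒮 := by
      rw [h𝒮, Finset.mem_filter, Finset.mem_powerset]; exact ⟨hC'A, hpC', hC'adm⟩
    exact absurd (hCmin C' this) (not_le.2 (Finset.card_lt_card hC'))
  · have hD : (C \ C') ∈ 𝒮 := by
      rw [h𝒮, Finset.mem_filter, Finset.mem_powerset]
      exact ⟨(Finset.sdiff_subset).trans hCA, Finset.mem_sdiff.2 ⟨hpC, hpC'⟩,
        adm_sdiff hA hB hCA hC'A hCadm hC'adm⟩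
    have hlt : (C \ C').card < C.card := by
      obtain ⟨q, hq⟩ := hC'ne
      have hqC : q ∈ C := (subset_of_ssubset hC') hq
      have : C \ C' ⊂ C := by
        refine Finset.ssubset_iff_of_subset (Finset.sdiff_subset) |>.2 ⟨q, hqC, ?_⟩
        simp [hq]
      exact Finset.card_lt_card this
    exact absurd (hCmin _ hD) (not_le.2 hlt)

/-- Minimal admissible sets sharing a chord are equal. -/
lemma min_unique {A B C₁ C₂ : Finset (Fin n × Fin n)} (hA : IsNCPM n A) (hB : IsNCPM n B)
    (h₁ : C₁ ⊆ A ∧ C₁.Nonempty ∧ Adm B C₁ ∧ ∀ C' ⊂ C₁, C'.Nonempty → ¬Adm B C')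
    (h₂ : C₂ ⊆ A ∧ C₂.Nonempty ∧ Adm B C₂ ∧ ∀ C' ⊂ C₂, C'.Nonempty → ¬Adm B C')
    {p : Fin n × Fin n} (hp₁ : p ∈ C₁) (hp₂ : p ∈ C₂) : C₁ = C₂ := by
  have hadm : Adm B (C₁ ∩ C₂) := adm_inter hA hB h₁.1 h₂.1 h₁.2.2.1 h₂.2.2.1
  have hne : (C₁ ∩ C₂).Nonempty := ⟨p, Finset.mem_inter.2 ⟨hp₁, hp₂⟩⟩
  have e₁ : C₁ ∩ C₂ = C₁ := by
    rcases (Finset.inter_subset_left (s₁ := C₁) (s₂ := C₂)).ssubset_or_eq with h | h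
    · exact absurd hadm (h₁.2.2.2 _ h hne)
    · exact h
  have e₂ : C₁ ∩ C₂ = C₂ := by
    rcases (Finset.inter_subset_right (s₁ := C₁) (s₂ := C₂)).ssubset_or_eq with h | h
    · exact absurd hadm (h₂.2.2.2 _ h hne)
    · exact h
  rw [← e₁, e₂]

end Adm

section Count

variable {n : ℕ}

lemma not_mem_ms_erase {A : Finset (Fin n × Fin n)} (hA : IsNCPM n A)
    {p : Fin n × Fin n} (hp : p ∈ A) {x : Fin n} (hx : x = p.1 ∨ x = p.2) :
    x ∉ matchedSet (A.erase p) := by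
  intro hm
  obtain ⟨q, hq, hxq⟩ := mem_matchedSet.1 hm
  have hq' := Finset.mem_erase.1 hq
  exact hq'.1 (eq_of_shared_endpoint hA hq'.2 hp hxq hx)

lemma adm_singleton {B : Finset (Fin n × Fin n)} {p : Fin n × Fin n} (hp : p ∈ B) :
    Adm B {p} := ⟨{p}, Finset.singleton_subset_iff.2 hp, rfl⟩

lemma min_singleton {B C' : Finset (Fin n × Fin n)} {p : Fin n × Fin n}
    (h : C' ⊂ {p}) (hne : C'.Nonempty) : ¬Adm B C' := by
  intro _
  rw [Finset.eq_empty_of_ssubset_singleton h] at hne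
  exact Finset.not_nonempty_empty hne

/-- If `C` satisfies the minimality property and contains a chord common to `A` and `B`,
then `C` is that singleton. -/
lemma eq_singleton_of_mem {A B C : Finset (Fin n × Fin n)} {p : Fin n × Fin n}
    (hpB : p ∈ B)
    (hC : C ⊆ A ∧ C.Nonempty ∧ Adm B C ∧ ∀ C' ⊂ C, C'.Nonempty → ¬Adm B C')
    (hpC : p ∈ C) : C = {p} := by
  rcases (Finset.singleton_subset_iff.2 hpC).ssubset_or_eq with h | h
  · exact absurd (adm_singleton hpB) (hC.2.2.2 _ h ⟨p, Finset.mem_singleton_self p⟩)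
  · exact h.symm

open scoped Classical in
lemma cyclesCount_common {A B : Finset (Fin n × Fin n)} (hA : IsNCPM n A)
    (hB : IsNCPM n B) {p : Fin n × Fin n} (hpA : p ∈ A) (hpB : p ∈ B) :
    cyclesCount A B = cyclesCount (A.erase p) (B.erase p) + 1 := by
  rw [cyclesCount_eq, cyclesCount_eq]
  have hAe : IsNCPM n (A.erase p) := isNCPM_subset hA (Finset.erase_subset _ _)
  have hset : (A.powerset.filter fun C =>
      C.Nonempty ∧ Adm B C ∧ ∀ C' ⊂ C, C'.Nonempty → ¬Adm B C') =
      insert {p} ((A.erase p).powerset.filter fun C =>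
      C.Nonempty ∧ Adm (B.erase p) C ∧ ∀ C' ⊂ C, C'.Nonempty → ¬Adm (B.erase p) C') := by
    ext C
    rw [mem_cfilter, Finset.mem_insert, mem_cfilter]
    constructor
    · rintro ⟨hCA, hCne, hCadm, hCmin⟩
      by_cases hpC : p ∈ C
      · exact Or.inl (eq_singleton_of_mem hpB ⟨hCA, hCne, hCadm, hCmin⟩ hpC)
      · refine Or.inr ⟨Finset.subset_erase.2 ⟨hCA, hpC⟩, hCne, ?_, ?_⟩
        · obtain ⟨B₀, hB₀, hm⟩ := hCadm
          refine ⟨B₀, Finset.subset_erase.2 ⟨hB₀, fun hpB₀ => ?_⟩, hm⟩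
          have : p.1 ∈ matchedSet C := by
            rw [hm]; exact endpoint_mem_matchedSet hpB₀ (Or.inl rfl)
          exact hpC (mem_of_endpoint_mem hA hCA hpA (Or.inl rfl) this)
        · rintro C' h1 h2 ⟨B₀, hB₀, hm⟩
          exact hCmin C' h1 h2 ⟨B₀, hB₀.trans (Finset.erase_subset _ _), hm⟩
    · rintro (rfl | ⟨hCA, hCne, ⟨B₀, hB₀, hm⟩, hCmin⟩)
      · exact ⟨Finset.singleton_subset_iff.2 hpA, ⟨p, Finset.mem_singleton_self p⟩,
          adm_singleton hpB, fun C' h1 h2 => min_singleton h1 h2⟩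
      · refine ⟨hCA.trans (Finset.erase_subset _ _), hCne,
          ⟨B₀, hB₀.trans (Finset.erase_subset _ _), hm⟩, ?_⟩
        rintro C' hss hne' ⟨B₁, hB₁, hm1⟩
        have hpB₁ : p ∉ B₁ := by
          intro hpB₁
          have h1 : p.1 ∈ matchedSet C' := by
            rw [hm1]; exact endpoint_mem_matchedSet hpB₁ (Or.inl rfl)
          have h2 : matchedSet C' ⊆ matchedSet (A.erase p) :=
            (matchedSet_subset (subset_of_ssubset hss)).trans (matchedSet_subset hCA)
          exact not_mem_ms_erase hA hpA (Or.inl rfl) (h2 h1)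
        exact hCmin C' hss hne' ⟨B₁, Finset.subset_erase.2 ⟨hB₁, hpB₁⟩, hm1⟩
  rw [hset, Finset.card_insert_of_notMem, Nat.add_comm]
  intro hmem
  have := (mem_cfilter.1 hmem).1
  have : p ∈ A.erase p := this (Finset.mem_singleton_self p)
  exact (Finset.mem_erase.1 this).1 rfl

open scoped Classical in
lemma cyclesCount_surgery {A A' B : Finset (Fin n × Fin n)}
    (hA : IsNCPM n A) (hA' : IsNCPM n A') (hB : IsNCPM n B)
    (hmsA : matchedSet A = matchedSet B) (hmsA' : matchedSet A' = matchedSet B)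
    {u v : Fin n} (huv : (u, v) ∈ B) {pu pv q' : Fin n × Fin n}
    (hpu : pu ∈ A) (hu : u = pu.1 ∨ u = pu.2) (hpv : pv ∈ A) (hv : v = pv.1 ∨ v = pv.2)
    (huvA' : (u, v) ∈ A') (hq' : q' ∈ A') (hq'uv : q' ≠ (u, v))
    (hK : A \ {pu, pv} = A' \ {(u, v), q'}) :
    cyclesCount A' B = cyclesCount A B + 1 := by
  rw [cyclesCount_eq, cyclesCount_eq]
  set P := A.powerset.filter (fun C =>
      C.Nonempty ∧ Adm B C ∧ ∀ C' ⊂ C, C'.Nonempty → ¬Adm B C') with hP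
  set P' := A'.powerset.filter (fun C =>
      C.Nonempty ∧ Adm B C ∧ ∀ C' ⊂ C, C'.Nonempty → ¬Adm B C') with hP'
  -- membership transfer: for C containing neither special chord
  have hPmem : ∀ C, C ∈ P ↔
      (C ⊆ A ∧ C.Nonempty ∧ Adm B C ∧ ∀ C' ⊂ C, C'.Nonempty → ¬Adm B C') :=
    fun C => mem_cfilter
  have hP'mem : ∀ C, C ∈ P' ↔
      (C ⊆ A' ∧ C.Nonempty ∧ Adm B C ∧ ∀ C' ⊂ C, C'.Nonempty → ¬Adm B C') :=
    fun C => mem_cfilter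
  -- in a P-set, pv ∈ C ↔ pu ∈ C
  have key : ∀ C ∈ P, (pu ∈ C ↔ pv ∈ C) := by
    intro C hC
    rw [hPmem] at hC
    obtain ⟨hCA, _, ⟨B₀, hB₀, hm⟩, _⟩ := hC
    constructor
    · intro hpuC
      have hu' : u ∈ matchedSet C := endpoint_mem_matchedSet hpuC hu
      have huvB₀ : (u, v) ∈ B₀ :=
        mem_of_endpoint_mem hB hB₀ huv (Or.inl rfl) (hm ▸ hu')
      have hv' : v ∈ matchedSet C := by
        rw [hm]; exact endpoint_mem_matchedSet huvB₀ (Or.inr rfl)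
      exact mem_of_endpoint_mem hA hCA hpv hv hv'
    · intro hpvC
      have hv' : v ∈ matchedSet C := endpoint_mem_matchedSet hpvC hv
      have huvB₀ : (u, v) ∈ B₀ :=
        mem_of_endpoint_mem hB hB₀ huv (Or.inr rfl) (hm ▸ hv')
      have hu' : u ∈ matchedSet C := by
        rw [hm]; exact endpoint_mem_matchedSet huvB₀ (Or.inl rfl)
      exact mem_of_endpoint_mem hA hCA hpu hu hu'
  -- the unique minimal set containing pu
  obtain ⟨C₀, hC₀, hpuC₀⟩ := min_exists hA hB hmsA hpu
  have hC₀P : C₀ ∈ P := (hPmem C₀).2 hC₀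
  have hfilterP : P.filter (fun C => pu ∈ C) = {C₀} := by
    ext C
    rw [Finset.mem_filter, Finset.mem_singleton]
    constructor
    · rintro ⟨hCP, hpuC⟩
      exact min_unique hA hB ((hPmem C).1 hCP) hC₀ hpuC hpuC₀
    · rintro rfl; exact ⟨hC₀P, hpuC₀⟩
  -- the unique minimal set containing q' in P'
  obtain ⟨D', hD', hq'D'⟩ := min_exists hA' hB hmsA' hq'
  have hD'P' : D' ∈ P' := (hP'mem D').2 hD'
  have huvD' : (u, v) ∉ D' := by
    intro huvD'
    have hss : {(u, v)} ⊂ D' := by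
      refine Finset.ssubset_iff_of_subset (Finset.singleton_subset_iff.2 huvD') |>.2
        ⟨q', hq'D', by simpa using hq'uv⟩
    exact hD'.2.2.2 _ hss ⟨(u, v), Finset.mem_singleton_self _⟩ (adm_singleton huv)
  have hsingP' : {(u, v)} ∈ P' := (hP'mem _).2
    ⟨Finset.singleton_subset_iff.2 huvA', ⟨_, Finset.mem_singleton_self _⟩,
      adm_singleton huv, fun C' h1 h2 => min_singleton h1 h2⟩
  have hfilterP' : P'.filter (fun C => (u, v) ∈ C) = {{(u, v)}} := by
    ext C
    rw [Finset.mem_filter, Finset.mem_singleton]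
    constructor
    · rintro ⟨hCP, huvC⟩
      exact eq_singleton_of_mem huv ((hP'mem C).1 hCP) huvC
    · rintro rfl; exact ⟨hsingP', Finset.mem_singleton_self _⟩
  have hfilterP'2 : (P'.filter (fun C => (u, v) ∉ C)).filter (fun C => q' ∈ C) = {D'} := by
    ext C
    rw [Finset.mem_filter, Finset.mem_filter, Finset.mem_singleton]
    constructor
    · rintro ⟨⟨hCP, _⟩, hq'C⟩
      exact min_unique hA' hB ((hP'mem C).1 hCP) hD' hq'C hq'D'
    · rintro rfl; exact ⟨⟨hD'P', huvD'⟩, hq'D'⟩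
  -- identification of the remainders
  have hrem : (P.filter (fun C => pu ∉ C)) =
      (P'.filter (fun C => (u, v) ∉ C)).filter (fun C => q' ∉ C) := by
    ext C
    constructor
    · intro hmemC
      obtain ⟨hCP, hpuC⟩ := Finset.mem_filter.1 hmemC
      have hpvC : pv ∉ C := fun h => hpuC ((key C hCP).2 h)
      obtain ⟨hCA, h1, h2, h3⟩ := (hPmem C).1 hCP
      have hCK : C ⊆ A \ {pu, pv} := by
        intro x hx
        rw [Finset.mem_sdiff, Finset.mem_insert, Finset.mem_singleton]
        exact ⟨hCA hx, by rintro (rfl | rfl) <;> [exact hpuC hx; exact hpvC hx]⟩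
      rw [hK] at hCK
      refine Finset.mem_filter.2 ⟨Finset.mem_filter.2
        ⟨(hP'mem C).2 ⟨hCK.trans (Finset.sdiff_subset), h1, h2, h3⟩, ?_⟩, ?_⟩
      · intro hmem
        have := hCK hmem
        rw [Finset.mem_sdiff] at this
        exact this.2 (by simp)
      · intro hmem
        have := hCK hmem
        rw [Finset.mem_sdiff] at this
        exact this.2 (by simp)
    · intro hmemC
      obtain ⟨h1', hq'C⟩ := Finset.mem_filter.1 hmemC
      obtain ⟨hCP', huvC⟩ := Finset.mem_filter.1 h1'
      obtain ⟨hCA', h1, h2, h3⟩ := (hP'mem C).1 hCP'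
      have hCK : C ⊆ A' \ {(u, v), q'} := by
        intro x hx
        rw [Finset.mem_sdiff, Finset.mem_insert, Finset.mem_singleton]
        exact ⟨hCA' hx, by rintro (rfl | rfl) <;> [exact huvC hx; exact hq'C hx]⟩
      rw [← hK] at hCK
      refine Finset.mem_filter.2 ⟨(hPmem C).2 ⟨hCK.trans (Finset.sdiff_subset), h1, h2, h3⟩, ?_⟩
      intro hmem
      have := hCK hmem
      rw [Finset.mem_sdiff] at this
      exact this.2 (by simp)
  -- count
  have c1 : P.card = (P.filter (fun C => pu ∉ C)).card + 1 := by
    rw [← Finset.card_filter_add_card_filter_not (p := fun C => pu ∈ C) (s := P),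
      hfilterP, Finset.card_singleton, Nat.add_comm]
  have c2 : P'.card = ((P'.filter (fun C => (u, v) ∉ C)).filter (fun C => q' ∉ C)).card + 2 := by
    rw [← Finset.card_filter_add_card_filter_not (p := fun C => (u, v) ∈ C) (s := P'),
      hfilterP', Finset.card_singleton,
      ← Finset.card_filter_add_card_filter_not (p := fun C => q' ∈ C)
        (s := P'.filter (fun C => (u, v) ∉ C)), hfilterP'2, Finset.card_singleton]
    omega
  rw [c1, c2, hrem]

end Count

section Geom

variable {n : ℕ}

/-- Endpoints of distinct chords are distinct, as ℕ-valued facts. -/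
lemma chord_ne_nat {A : Finset (Fin n × Fin n)} (hA : IsNCPM n A) {p q : Fin n × Fin n}
    (hp : p ∈ A) (hq : q ∈ A) (hne : p ≠ q) :
    p.1.val ≠ q.1.val ∧ p.1.val ≠ q.2.val ∧ p.2.val ≠ q.1.val ∧ p.2.val ≠ q.2.val := by
  obtain ⟨h1, h2, h3, h4⟩ := hA.2.1 p hp q hq hne
  exact ⟨fun h => h1 (Fin.val_injective h), fun h => h2 (Fin.val_injective h),
    fun h => h3 (Fin.val_injective h), fun h => h4 (Fin.val_injective h)⟩

lemma chord_lt_nat {A : Finset (Fin n × Fin n)} (hA : IsNCPM n A) {p : Fin n × Fin n}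
    (hp : p ∈ A) : p.1.val < p.2.val := hA.1 p hp

lemma chord_nc_nat {A : Finset (Fin n × Fin n)} (hA : IsNCPM n A) {p q : Fin n × Fin n}
    (hp : p ∈ A) (hq : q ∈ A) :
    ¬(p.1.val < q.1.val ∧ q.1.val < p.2.val ∧ p.2.val < q.2.val) := by
  intro ⟨h1, h2, h3⟩
  exact hA.2.2 p hp q hq ⟨h1, h2, h3⟩

/-- Shielding: if a chord `r ≠ p` has an endpoint strictly inside the span of `p`,
then both its endpoints are strictly inside. -/
lemma shield {A : Finset (Fin n × Fin n)} (hA : IsNCPM n A) {p r : Fin n × Fin n}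
    (hp : p ∈ A) (hr : r ∈ A) (hne : r ≠ p) {x : Fin n} (hx : x = r.1 ∨ x = r.2)
    (h1 : p.1 < x) (h2 : x < p.2) : p.1 < r.1 ∧ r.2 < p.2 := by
  have d := chord_ne_nat hA hr hp hne
  have lr := chord_lt_nat hA hr
  have lp := chord_lt_nat hA hp
  have nc1 := chord_nc_nat hA hp hr
  have nc2 := chord_nc_nat hA hr hp
  have h1' : p.1.val < x.val := h1
  have h2' : x.val < p.2.val := h2
  have hx' : x.val = r.1.val ∨ x.val = r.2.val := by
    rcases hx with rfl | rfl
    · exact Or.inl rfl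
    · exact Or.inr rfl
  constructor
  · show p.1.val < r.1.val
    omega
  · show r.2.val < p.2.val
    omega

/-- A crossing-freeness criterion from shielding. -/
lemma nocross_of_shield {r d : Fin n × Fin n} (hr : r.1 < r.2) (hd : d.1 < d.2)
    (h : ∀ x : Fin n, (x = r.1 ∨ x = r.2) → d.1 < x → x < d.2 → d.1 < r.1 ∧ r.2 < d.2) :
    ¬(d.1 < r.1 ∧ r.1 < d.2 ∧ d.2 < r.2) ∧ ¬(r.1 < d.1 ∧ d.1 < r.2 ∧ r.2 < d.2) := by
  constructor
  · rintro ⟨a, b, c⟩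
    have := h r.1 (Or.inl rfl) a b
    exact absurd c (not_lt.2 (le_of_lt this.2))
  · rintro ⟨a, b, c⟩
    have := h r.2 (Or.inr rfl) b c
    exact absurd a (not_lt.2 (le_of_lt this.1))

lemma matchedSet_singleton {p : Fin n × Fin n} :
    matchedSet ({p} : Finset (Fin n × Fin n)) = {p.1, p.2} := by
  simp [matchedSet]

/-- interior of a chord is even. -/
lemma interior_even {A : Finset (Fin n × Fin n)} (hA : IsNCPM n A) {p : Fin n × Fin n}
    (hp : p ∈ A) :
    (matchedSet A ∩ Finset.Ioo p.1 p.2).card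
      = 2 * (A.filter fun r => p.1 < r.1 ∧ r.2 < p.2).card := by
  have hset : matchedSet A ∩ Finset.Ioo p.1 p.2
      = matchedSet (A.filter fun r => p.1 < r.1 ∧ r.2 < p.2) := by
    ext x
    simp only [Finset.mem_inter, Finset.mem_Ioo]
    constructor
    · rintro ⟨hx, hx1, hx2⟩
      obtain ⟨r, hr, hxr⟩ := mem_matchedSet.1 hx
      have hrp : r ≠ p := by
        rintro rfl
        rcases hxr with rfl | rfl
        · exact absurd hx1 (lt_irrefl _)
        · exact absurd hx2 (lt_irrefl _)
      have := shield hA hp hr hrp hxr hx1 hx2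
      exact mem_matchedSet.2 ⟨r, Finset.mem_filter.2 ⟨hr, this⟩, hxr⟩
    · intro hx
      obtain ⟨r, hr, hxr⟩ := mem_matchedSet.1 hx
      obtain ⟨hrA, hr1, hr2⟩ := Finset.mem_filter.1 hr
      have hlt := hA.1 r hrA
      refine ⟨endpoint_mem_matchedSet hrA hxr, ?_, ?_⟩
      · rcases hxr with rfl | rfl
        · exact hr1
        · exact lt_trans hr1 hlt
      · rcases hxr with rfl | rfl
        · exact lt_trans hlt hr2
        · exact hr2
  rw [hset, matchedSet_card hA (Finset.filter_subset _ _)]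

/-- Splitting an interval count at an interior point of `T`. -/
lemma Ioo_card_split {T : Finset (Fin n)} {a b c : Fin n} (hab : a < b) (hbc : b < c)
    (hb : b ∈ T) :
    (T ∩ Finset.Ioo a c).card
      = (T ∩ Finset.Ioo a b).card + 1 + (T ∩ Finset.Ioo b c).card := by
  have hset : T ∩ Finset.Ioo a c
      = (T ∩ Finset.Ioo a b) ∪ insert b (T ∩ Finset.Ioo b c) := by
    ext x
    simp only [Finset.mem_inter, Finset.mem_Ioo, Finset.mem_union, Finset.mem_insert]
    constructor
    · rintro ⟨hx, h1, h2⟩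
      rcases lt_trichotomy x b with h | rfl | h
      · exact Or.inl ⟨hx, h1, h⟩
      · exact Or.inr (Or.inl rfl)
      · exact Or.inr (Or.inr ⟨hx, h, h2⟩)
    · rintro (⟨hx, h1, h2⟩ | rfl | ⟨hx, h1, h2⟩)
      · exact ⟨hx, h1, h2.trans hbc⟩
      · exact ⟨hb, hab, hbc⟩
      · exact ⟨hx, hab.trans h1, h2⟩
  have hd1 : Disjoint (T ∩ Finset.Ioo a b) (insert b (T ∩ Finset.Ioo b c)) := by
    rw [Finset.disjoint_left]
    intro x hx hx'
    have h2 := (Finset.mem_inter.1 hx).2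
    have hxb : x < b := (Finset.mem_Ioo.1 h2).2
    rcases Finset.mem_insert.1 hx' with rfl | hx''
    · exact absurd hxb (lt_irrefl _)
    · have := (Finset.mem_Ioo.1 (Finset.mem_inter.1 hx'').2).1
      exact absurd (hxb.trans this) (lt_irrefl _)
  have hbnot : b ∉ T ∩ Finset.Ioo b c := by
    intro h
    exact absurd (Finset.mem_Ioo.1 (Finset.mem_inter.1 h).2).1 (lt_irrefl _)
  rw [hset, Finset.card_union_of_disjoint hd1, Finset.card_insert_of_notMem hbnot]
  omega

end Geom

section Fc

variable {n : ℕ}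

/-- Total interior count of a family of chords, relative to the ground set `T`. -/
def Fc (T : Finset (Fin n)) (X : Finset (Fin n × Fin n)) : ℕ :=
  ∑ p ∈ X, (T ∩ Finset.Ioo p.1 p.2).card

lemma Fc_erase {T : Finset (Fin n)} {X : Finset (Fin n × Fin n)} {p : Fin n × Fin n}
    (hp : p ∈ X) : Fc T X = (T ∩ Finset.Ioo p.1 p.2).card + Fc T (X.erase p) :=
  (Finset.add_sum_erase X _ hp).symm

lemma Fc_insert {T : Finset (Fin n)} {X : Finset (Fin n × Fin n)} {p : Fin n × Fin n}
    (hp : p ∉ X) : Fc T (insert p X) = (T ∩ Finset.Ioo p.1 p.2).card + Fc T X :=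
  Finset.sum_insert hp

lemma Fc_even {A : Finset (Fin n × Fin n)} (hA : IsNCPM n A) :
    Fc (matchedSet A) A % 2 = 0 := by
  have : Fc (matchedSet A) A
      = ∑ p ∈ A, 2 * ((A.filter fun r => p.1 < r.1 ∧ r.2 < p.2).card) :=
    Finset.sum_congr rfl fun p hp => interior_even hA hp
  rw [this, ← Finset.mul_sum]
  omega

/-- The number of elements of the matched set lying left of `p.1`, versus covering chords. -/
lemma cov_parity {A : Finset (Fin n × Fin n)} (hA : IsNCPM n A) {p : Fin n × Fin n}
    (hp : p ∈ A) :
    (matchedSet A ∩ Finset.Iio p.1).card % 2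
      = ((A.erase p).filter fun r => r.1 < p.1 ∧ p.1 < r.2).card % 2 := by
  classical
  have hsplit : matchedSet A ∩ Finset.Iio p.1
      = A.biUnion fun r => ({r.1, r.2} : Finset (Fin n)) ∩ Finset.Iio p.1 := by
    ext x
    simp only [matchedSet, Finset.mem_inter, Finset.mem_biUnion]
    tauto
  have hcard : (matchedSet A ∩ Finset.Iio p.1).card
      = ∑ r ∈ A, (({r.1, r.2} : Finset (Fin n)) ∩ Finset.Iio p.1).card := by
    rw [hsplit, Finset.card_biUnion]
    intro r hr s hs hne
    obtain ⟨h1, h2, h3, h4⟩ := hA.2.1 r hr s hs hne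
    rw [Function.onFun, Finset.disjoint_left]
    intro x hx hx'
    have hx1 := (Finset.mem_inter.1 hx).1
    have hx2 := (Finset.mem_inter.1 hx').1
    simp only [Finset.mem_insert, Finset.mem_singleton] at hx1 hx2
    rcases hx1 with rfl | rfl <;> rcases hx2 with h | h <;> simp_all
  have hpterm : (({p.1, p.2} : Finset (Fin n)) ∩ Finset.Iio p.1).card = 0 := by
    rw [Finset.card_eq_zero]
    ext x
    simp only [Finset.mem_inter, Finset.mem_insert, Finset.mem_singleton, Finset.mem_Iio,
      Finset.notMem_empty, iff_false]
    rintro ⟨rfl | rfl, hlt⟩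
    · exact absurd hlt (lt_irrefl _)
    · exact absurd ((hA.1 p hp).trans hlt) (lt_irrefl _)
  have hterm : ∀ r ∈ A.erase p,
      (({r.1, r.2} : Finset (Fin n)) ∩ Finset.Iio p.1).card
        = 2 * (if r.2 < p.1 then 1 else 0) + (if r.1 < p.1 ∧ p.1 < r.2 then 1 else 0) := by
    intro r hr
    obtain ⟨hrne, hrA⟩ := Finset.mem_erase.1 hr
    have d := chord_ne_nat hA hrA hp hrne
    have lr := chord_lt_nat hA hrA
    have h12 : r.1 ≠ r.2 := ne_of_lt (hA.1 r hrA)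
    rcases lt_trichotomy r.2 p.1 with h2 | h2 | h2
    · have h1 : r.1 < p.1 := (hA.1 r hrA).trans h2
      have : ({r.1, r.2} : Finset (Fin n)) ∩ Finset.Iio p.1 = {r.1, r.2} := by
        rw [Finset.inter_eq_left]
        intro x hx
        simp only [Finset.mem_insert, Finset.mem_singleton] at hx
        rcases hx with rfl | rfl
        · exact Finset.mem_Iio.2 h1
        · exact Finset.mem_Iio.2 h2
      rw [this, Finset.card_insert_of_notMem (by simpa using h12), Finset.card_singleton]
      have : ¬(r.1 < p.1 ∧ p.1 < r.2) := fun ⟨_, hh⟩ => absurd (hh.trans h2) (lt_irrefl _)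
      simp [h2, this]
    · exact absurd (congrArg Fin.val h2) d.2.2.1
    · rcases lt_trichotomy r.1 p.1 with h1 | h1 | h1
      · have : ({r.1, r.2} : Finset (Fin n)) ∩ Finset.Iio p.1 = {r.1} := by
          ext x
          simp only [Finset.mem_inter, Finset.mem_insert, Finset.mem_singleton, Finset.mem_Iio]
          constructor
          · rintro ⟨rfl | rfl, hlt⟩
            · rfl
            · exact absurd (h2.trans hlt) (lt_irrefl _)
          · rintro rfl
            exact ⟨Or.inl rfl, h1⟩
        rw [this, Finset.card_singleton]
        have hn2 : ¬(r.2 < p.1) := fun hh => absurd (h2.trans hh) (lt_irrefl _)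
        simp [hn2, h1, h2]
      · exact absurd (congrArg Fin.val h1) d.1
      · have : ({r.1, r.2} : Finset (Fin n)) ∩ Finset.Iio p.1 = ∅ := by
          ext x
          simp only [Finset.mem_inter, Finset.mem_insert, Finset.mem_singleton, Finset.mem_Iio,
            Finset.notMem_empty, iff_false]
          rintro ⟨rfl | rfl, hlt⟩
          · exact absurd (h1.trans hlt) (lt_irrefl _)
          · exact absurd ((h1.trans (hA.1 r hrA)).trans hlt) (lt_irrefl _)
        rw [this, Finset.card_empty]
        have hn1 : ¬(r.1 < p.1) := fun hh => absurd (h1.trans hh) (lt_irrefl _)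
        have hn2 : ¬(r.2 < p.1) := fun hh => absurd ((h1.trans (hA.1 r hrA)).trans hh) (lt_irrefl _)
        simp [hn1, hn2]
  rw [hcard, ← Finset.add_sum_erase _ _ hp, hpterm, Nat.zero_add,
    Finset.sum_congr rfl hterm, Finset.sum_add_distrib, ← Finset.mul_sum,
    Finset.card_filter]
  omega

/-- Existence of a chord with no matched point strictly inside its span. -/
lemma exists_adjacent {B : Finset (Fin n × Fin n)} (hB : IsNCPM n B) (hne : B.Nonempty) :
    ∃ p ∈ B, matchedSet B ∩ Finset.Ioo p.1 p.2 = ∅ := by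
  classical
  obtain ⟨p, hp, hmin⟩ := Finset.exists_min_image B
    (fun p => (matchedSet B ∩ Finset.Ioo p.1 p.2).card) hne
  refine ⟨p, hp, ?_⟩
  by_contra hne'
  obtain ⟨x, hx⟩ := Finset.nonempty_iff_ne_empty.2 hne'
  obtain ⟨hx1, hx2⟩ := Finset.mem_inter.1 hx
  obtain ⟨hxl, hxr⟩ := Finset.mem_Ioo.1 hx2
  obtain ⟨r, hr, hxr'⟩ := mem_matchedSet.1 hx1
  have hrp : r ≠ p := by
    rintro rfl
    rcases hxr' with rfl | rfl
    · exact absurd hxl (lt_irrefl _)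
    · exact absurd hxr (lt_irrefl _)
  obtain ⟨hs1, hs2⟩ := shield hB hp hr hrp hxr' hxl hxr
  have hsub : matchedSet B ∩ Finset.Ioo r.1 r.2 ⊂ matchedSet B ∩ Finset.Ioo p.1 p.2 := by
    refine Finset.ssubset_iff_of_subset ?_ |>.2 ?_
    · refine Finset.inter_subset_inter (le_refl _) ?_
      exact Finset.Ioo_subset_Ioo (le_of_lt hs1) (le_of_lt hs2)
    · refine ⟨r.1, Finset.mem_inter.2 ⟨endpoint_mem_matchedSet hr (Or.inl rfl),
        Finset.mem_Ioo.2 ⟨hs1, (hB.1 r hr).trans hs2⟩⟩, ?_⟩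
      intro hmem
      exact absurd (Finset.mem_Ioo.1 (Finset.mem_inter.1 hmem).2).1 (lt_irrefl _)
  exact absurd (hmin r hr) (not_le.2 (Finset.card_lt_card hsub))

/-- Interior counts after deleting the two endpoints of an adjacent chord of the ground set. -/
lemma Fc_shrink {A : Finset (Fin n × Fin n)} (hA : IsNCPM n A) {p : Fin n × Fin n}
    (hp : p ∈ A) (hadj : matchedSet A ∩ Finset.Ioo p.1 p.2 = ∅) :
    Fc (matchedSet A) A
      = Fc (matchedSet A \ {p.1, p.2}) (A.erase p)
        + 2 * ((A.erase p).filter fun r => r.1 < p.1 ∧ p.1 < r.2).card := by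
  classical
  set T := matchedSet A with hT
  rw [Fc_erase hp, hadj, Finset.card_empty, Nat.zero_add]
  have hterm : ∀ r ∈ A.erase p,
      (T ∩ Finset.Ioo r.1 r.2).card
        = ((T \ {p.1, p.2}) ∩ Finset.Ioo r.1 r.2).card
          + 2 * (if r.1 < p.1 ∧ p.1 < r.2 then 1 else 0) := by
    intro r hr
    obtain ⟨hrne, hrA⟩ := Finset.mem_erase.1 hr
    have d := chord_ne_nat hA hrA hp hrne
    have lr := chord_lt_nat hA hrA
    have lp := chord_lt_nat hA hp
    have hp1T : p.1 ∈ T := endpoint_mem_matchedSet hp (Or.inl rfl)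
    have hp2T : p.2 ∈ T := endpoint_mem_matchedSet hp (Or.inr rfl)
    -- p.1 inside span r iff p.2 inside span r
    have hiff : (r.1 < p.1 ∧ p.1 < r.2) ↔ (r.1 < p.2 ∧ p.2 < r.2) := by
      constructor
      · rintro ⟨h1, h2⟩
        have hr2T : r.2 ∈ T := endpoint_mem_matchedSet hrA (Or.inr rfl)
        have : ¬(p.1 < r.2 ∧ r.2 < p.2) := by
          intro hmem
          have : r.2 ∈ T ∩ Finset.Ioo p.1 p.2 :=
            Finset.mem_inter.2 ⟨hr2T, Finset.mem_Ioo.2 hmem⟩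
          rw [hadj] at this
          exact absurd this (Finset.notMem_empty _)
        have h3 : p.2.val < r.2.val ∨ p.2.val = r.2.val ∨ r.2.val < p.2.val :=
          Nat.lt_trichotomy _ _
        have h2' : p.1.val < r.2.val := h2
        have h1' : r.1.val < p.1.val := h1
        have hlp : p.1.val < p.2.val := lp
        have hd : r.2.val ≠ p.2.val := d.2.2.2
        have hnn : ¬(p.1.val < r.2.val ∧ r.2.val < p.2.val) := by
          intro hmem
          exact this ⟨hmem.1, hmem.2⟩
        constructor
        · show r.1.val < p.2.val
          omega
        · show p.2.val < r.2.val
          omega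
      · rintro ⟨h1, h2⟩
        have hr1T : r.1 ∈ T := endpoint_mem_matchedSet hrA (Or.inl rfl)
        have : ¬(p.1 < r.1 ∧ r.1 < p.2) := by
          intro hmem
          have : r.1 ∈ T ∩ Finset.Ioo p.1 p.2 :=
            Finset.mem_inter.2 ⟨hr1T, Finset.mem_Ioo.2 hmem⟩
          rw [hadj] at this
          exact absurd this (Finset.notMem_empty _)
        have h1' : r.1.val < p.2.val := h1
        have h2' : p.2.val < r.2.val := h2
        have hlp : p.1.val < p.2.val := lp
        have hd : r.1.val ≠ p.1.val := d.1
        have hnn : ¬(p.1.val < r.1.val ∧ r.1.val < p.2.val) := by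
          intro hmem
          exact this ⟨hmem.1, hmem.2⟩
        constructor
        · show r.1.val < p.1.val
          omega
        · show p.1.val < r.2.val
          have : p.1.val < p.2.val := lp
          omega
    have hsplitcard : (T ∩ Finset.Ioo r.1 r.2).card
        = ((T \ {p.1, p.2}) ∩ Finset.Ioo r.1 r.2).card
          + (({p.1, p.2} : Finset (Fin n)) ∩ Finset.Ioo r.1 r.2).card := by
      have hpairT : ({p.1, p.2} : Finset (Fin n)) ⊆ T := by
        intro x hx
        simp only [Finset.mem_insert, Finset.mem_singleton] at hx
        rcases hx with rfl | rfl
        · exact hp1T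
        · exact hp2T
      have hdisj : Disjoint ((T \ {p.1, p.2}) ∩ Finset.Ioo r.1 r.2)
          (({p.1, p.2} : Finset (Fin n)) ∩ Finset.Ioo r.1 r.2) := by
        rw [Finset.disjoint_left]
        intro x hx hx'
        exact ((Finset.mem_sdiff.1 (Finset.mem_inter.1 hx).1).2) ((Finset.mem_inter.1 hx').1)
      rw [← Finset.card_union_of_disjoint hdisj, ← Finset.union_inter_distrib_right,
        Finset.sdiff_union_of_subset hpairT]
    by_cases hcov : r.1 < p.1 ∧ p.1 < r.2
    · have hcov2 := hiff.1 hcov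
      have : ({p.1, p.2} : Finset (Fin n)) ∩ Finset.Ioo r.1 r.2 = {p.1, p.2} := by
        rw [Finset.inter_eq_left]
        intro x hx
        simp only [Finset.mem_insert, Finset.mem_singleton] at hx
        rcases hx with rfl | rfl
        · exact Finset.mem_Ioo.2 hcov
        · exact Finset.mem_Ioo.2 hcov2
      rw [hsplitcard, this, if_pos hcov]
      have hne12 : p.1 ≠ p.2 := ne_of_lt lp
      rw [Finset.card_insert_of_notMem (by simpa using hne12), Finset.card_singleton]
    · have hcov2 : ¬(r.1 < p.2 ∧ p.2 < r.2) := fun h => hcov (hiff.2 h)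
      have : ({p.1, p.2} : Finset (Fin n)) ∩ Finset.Ioo r.1 r.2 = ∅ := by
        ext x
        simp only [Finset.mem_inter, Finset.mem_insert, Finset.mem_singleton, Finset.mem_Ioo,
          Finset.notMem_empty, iff_false]
        rintro ⟨rfl | rfl, hmem⟩
        · exact hcov hmem
        · exact hcov2 hmem
      rw [hsplitcard, this, if_neg hcov, Finset.card_empty]
  rw [show Fc T (A.erase p) = ∑ r ∈ A.erase p, (T ∩ Finset.Ioo r.1 r.2).card from rfl,
    Finset.sum_congr rfl hterm, Finset.sum_add_distrib, ← Finset.mul_sum]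
  have : Fc (T \ {p.1, p.2}) (A.erase p)
      = ∑ r ∈ A.erase p, ((T \ {p.1, p.2}) ∩ Finset.Ioo r.1 r.2).card := rfl
  rw [this, ← Finset.sum_filter, Finset.sum_const, smul_eq_mul, mul_one]

end Fc

section Surg

variable {n : ℕ}

lemma ne4_symm {a b : Fin n × Fin n}
    (h : a.1 ≠ b.1 ∧ a.1 ≠ b.2 ∧ a.2 ≠ b.1 ∧ a.2 ≠ b.2) :
    b.1 ≠ a.1 ∧ b.1 ≠ a.2 ∧ b.2 ≠ a.1 ∧ b.2 ≠ a.2 :=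
  ⟨h.1.symm, h.2.2.1.symm, h.2.1.symm, h.2.2.2.symm⟩

lemma isNCPM_insert2 {K : Finset (Fin n × Fin n)} (hK : IsNCPM n K) {c d : Fin n × Fin n}
    (hc : c.1 < c.2) (hd : d.1 < d.2)
    (hcd : c.1 ≠ d.1 ∧ c.1 ≠ d.2 ∧ c.2 ≠ d.1 ∧ c.2 ≠ d.2)
    (hcK : ∀ r ∈ K, c.1 ≠ r.1 ∧ c.1 ≠ r.2 ∧ c.2 ≠ r.1 ∧ c.2 ≠ r.2)
    (hdK : ∀ r ∈ K, d.1 ≠ r.1 ∧ d.1 ≠ r.2 ∧ d.2 ≠ r.1 ∧ d.2 ≠ r.2)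
    (ncd : ¬(c.1 < d.1 ∧ d.1 < c.2 ∧ c.2 < d.2) ∧ ¬(d.1 < c.1 ∧ c.1 < d.2 ∧ d.2 < c.2))
    (ncK : ∀ r ∈ K, ¬(c.1 < r.1 ∧ r.1 < c.2 ∧ c.2 < r.2) ∧ ¬(r.1 < c.1 ∧ c.1 < r.2 ∧ r.2 < c.2))
    (ndK : ∀ r ∈ K, ¬(d.1 < r.1 ∧ r.1 < d.2 ∧ d.2 < r.2) ∧ ¬(r.1 < d.1 ∧ d.1 < r.2 ∧ r.2 < d.2)) :
    IsNCPM n (insert c (insert d K)) := by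
  have hself : ∀ q : Fin n × Fin n, ¬(q.1 < q.1 ∧ q.1 < q.2 ∧ q.2 < q.2) := by
    rintro q ⟨h, -, -⟩; exact absurd h (lt_irrefl _)
  refine ⟨?_, ?_, ?_⟩
  · intro r hr
    rcases Finset.mem_insert.1 hr with rfl | hr
    · exact hc
    rcases Finset.mem_insert.1 hr with rfl | hr
    · exact hd
    · exact hK.1 r hr
  · intro r hr s hs hne
    rcases Finset.mem_insert.1 hr with rfl | hr'
    · rcases Finset.mem_insert.1 hs with rfl | hs'
      · exact absurd rfl hne
      rcases Finset.mem_insert.1 hs' with rfl | hs''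
      · exact hcd
      · exact hcK s hs''
    rcases Finset.mem_insert.1 hr' with rfl | hr''
    · rcases Finset.mem_insert.1 hs with rfl | hs'
      · exact ne4_symm hcd
      rcases Finset.mem_insert.1 hs' with rfl | hs''
      · exact absurd rfl hne
      · exact hdK s hs''
    · rcases Finset.mem_insert.1 hs with rfl | hs'
      · exact ne4_symm (hcK r hr'')
      rcases Finset.mem_insert.1 hs' with rfl | hs''
      · exact ne4_symm (hdK r hr'')
      · exact hK.2.1 r hr'' s hs'' hne
  · intro r hr s hs
    rcases Finset.mem_insert.1 hr with rfl | hr'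
    · rcases Finset.mem_insert.1 hs with rfl | hs'
      · exact hself _
      rcases Finset.mem_insert.1 hs' with rfl | hs''
      · exact ncd.1
      · exact (ncK s hs'').1
    rcases Finset.mem_insert.1 hr' with rfl | hr''
    · rcases Finset.mem_insert.1 hs with rfl | hs'
      · exact ncd.2
      rcases Finset.mem_insert.1 hs' with rfl | hs''
      · exact hself _
      · exact (ndK s hs'').1
    · rcases Finset.mem_insert.1 hs with rfl | hs'
      · exact (ncK r hr'').2
      rcases Finset.mem_insert.1 hs' with rfl | hs''
      · exact (ndK r hr'').2
      · exact hK.2.2 r hr'' s hs''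

lemma matchedSet_insert {E : Finset (Fin n × Fin n)} {p : Fin n × Fin n} :
    matchedSet (insert p E) = insert p.1 (insert p.2 (matchedSet E)) := by
  ext x
  simp only [matchedSet, Finset.mem_biUnion, Finset.mem_insert, Finset.mem_singleton]
  constructor
  · rintro ⟨q, rfl | hq, hx⟩
    · tauto
    · exact Or.inr (Or.inr ⟨q, hq, hx⟩)
  · rintro (rfl | rfl | ⟨q, hq, hx⟩)
    · exact ⟨p, Or.inl rfl, Or.inl rfl⟩
    · exact ⟨p, Or.inl rfl, Or.inr rfl⟩
    · exact ⟨q, Or.inr hq, hx⟩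

/-- Surgery, configuration (a): `pu = (w,u)`, `pv = (v,z)` with `w < u < v < z`. -/
lemma surgery_case_a {A : Finset (Fin n × Fin n)} (hA : IsNCPM n A)
    {u v w z : Fin n} {pu pv : Fin n × Fin n}
    (hpu : pu ∈ A) (hpv : pv ∈ A) (hnepq : pu ≠ pv)
    (hpu_eq : pu = (w, u)) (hpv_eq : pv = (v, z))
    (huv : u < v) (hadj : matchedSet A ∩ Finset.Ioo u v = ∅) :
    IsNCPM n (insert (u, v) (insert (w, z) (A \ {pu, pv})))
    ∧ matchedSet (insert (u, v) (insert (w, z) (A \ {pu, pv}))) = matchedSet A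
    ∧ Fc (matchedSet A) (insert (u, v) (insert (w, z) (A \ {pu, pv})))
        = Fc (matchedSet A) A + 2
    ∧ A \ {pu, pv} = (insert (u, v) (insert (w, z) (A \ {pu, pv}))) \ {(u, v), (w, z)} := by
  subst hpu_eq hpv_eq
  set T := matchedSet A with hT
  set K := A \ {((w, u) : Fin n × Fin n), (v, z)} with hKdef
  have hwu : w < u := hA.1 _ hpu
  have hvz : v < z := hA.1 _ hpv
  have hKmem : ∀ r ∈ K, r ∈ A ∧ r ≠ (w, u) ∧ r ≠ (v, z) := by
    intro r hr
    obtain ⟨h1, h2⟩ := Finset.mem_sdiff.1 hr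
    simp only [Finset.mem_insert, Finset.mem_singleton] at h2
    exact ⟨h1, fun h => h2 (Or.inl h), fun h => h2 (Or.inr h)⟩
  have hKsub : K ⊆ A := Finset.sdiff_subset
  have hKncpm : IsNCPM n K := isNCPM_subset hA hKsub
  have huT : u ∈ T := endpoint_mem_matchedSet hpu (Or.inr rfl)
  have hvT : v ∈ T := endpoint_mem_matchedSet hpv (Or.inl rfl)
  have hwT : w ∈ T := endpoint_mem_matchedSet hpu (Or.inl rfl)
  have hzT : z ∈ T := endpoint_mem_matchedSet hpv (Or.inr rfl)
  -- endpoint freshness for K chords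
  have hfree : ∀ r ∈ K, ∀ x : Fin n, (x = r.1 ∨ x = r.2) → x ≠ u ∧ x ≠ v ∧ x ≠ w ∧ x ≠ z := by
    intro r hr x hx
    obtain ⟨hrA, hru, hrv⟩ := hKmem r hr
    refine ⟨?_, ?_, ?_, ?_⟩ <;> rintro rfl
    · exact hru (eq_of_shared_endpoint hA hrA hpu hx (Or.inr rfl))
    · exact hrv (eq_of_shared_endpoint hA hrA hpv hx (Or.inl rfl))
    · exact hru (eq_of_shared_endpoint hA hrA hpu hx (Or.inl rfl))
    · exact hrv (eq_of_shared_endpoint hA hrA hpv hx (Or.inr rfl))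
  have hcK : ∀ r ∈ K, (u ≠ r.1 ∧ u ≠ r.2) ∧ (v ≠ r.1 ∧ v ≠ r.2) := by
    intro r hr
    have h1 := hfree r hr r.1 (Or.inl rfl)
    have h2 := hfree r hr r.2 (Or.inr rfl)
    exact ⟨⟨(h1.1 <| ·.symm), (h2.1 <| ·.symm)⟩, ⟨(h1.2.1 <| ·.symm), (h2.2.1 <| ·.symm)⟩⟩
  have hdK : ∀ r ∈ K, (w ≠ r.1 ∧ w ≠ r.2) ∧ (z ≠ r.1 ∧ z ≠ r.2) := by
    intro r hr
    have h1 := hfree r hr r.1 (Or.inl rfl)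
    have h2 := hfree r hr r.2 (Or.inr rfl)
    exact ⟨⟨(h1.2.2.1 <| ·.symm), (h2.2.2.1 <| ·.symm)⟩,
      ⟨(h1.2.2.2 <| ·.symm), (h2.2.2.2 <| ·.symm)⟩⟩
  have hncpm' : IsNCPM n (insert (u, v) (insert (w, z) K)) := by
    refine isNCPM_insert2 hKncpm huv (hwu.trans (huv.trans hvz)) ?_ ?_ ?_ ?_ ?_ ?_
    · exact ⟨ne_of_gt hwu, ne_of_lt (huv.trans hvz), ne_of_gt (hwu.trans huv), ne_of_lt hvz⟩
    · exact fun r hr => ⟨(hcK r hr).1.1, (hcK r hr).1.2, (hcK r hr).2.1, (hcK r hr).2.2⟩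
    · exact fun r hr => ⟨(hdK r hr).1.1, (hdK r hr).1.2, (hdK r hr).2.1, (hdK r hr).2.2⟩
    · constructor
      · rintro ⟨h, -, -⟩; exact absurd (hwu.trans h) (lt_irrefl _)
      · rintro ⟨-, -, h⟩; exact absurd (hvz.trans h) (lt_irrefl _)
    · intro r hr
      refine nocross_of_shield (hA.1 r (hKmem r hr).1) huv ?_
      intro x hx h1 h2
      have : x ∈ T ∩ Finset.Ioo u v := Finset.mem_inter.2
        ⟨endpoint_mem_matchedSet ((hKmem r hr).1) hx, Finset.mem_Ioo.2 ⟨h1, h2⟩⟩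
      rw [hadj] at this
      exact absurd this (Finset.notMem_empty _)
    · intro r hr
      obtain ⟨hrA, hru, hrv⟩ := hKmem r hr
      refine nocross_of_shield (hA.1 r hrA) (hwu.trans (huv.trans hvz)) ?_
      intro x hx h1 h2
      rcases lt_trichotomy x u with hxu | rfl | hxu
      · have hs := shield hA hpu hrA hru hx h1 hxu
        exact ⟨hs.1, hs.2.trans (huv.trans hvz)⟩
      · exact absurd (eq_of_shared_endpoint hA hrA hpu hx (Or.inr rfl)) hru
      · rcases lt_trichotomy x v with hxv | rfl | hxv
        · have : x ∈ T ∩ Finset.Ioo u v := Finset.mem_inter.2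
            ⟨endpoint_mem_matchedSet hrA hx, Finset.mem_Ioo.2 ⟨hxu, hxv⟩⟩
          rw [hadj] at this
          exact absurd this (Finset.notMem_empty _)
        · exact absurd (eq_of_shared_endpoint hA hrA hpv hx (Or.inl rfl)) hrv
        · have hs := shield hA hpv hrA hrv hx hxv h2
          exact ⟨hwu.trans (huv.trans hs.1), hs.2⟩
  -- matched set
  have hpair_sub : ({((w, u) : Fin n × Fin n), (v, z)} : Finset (Fin n × Fin n)) ⊆ A := by
    intro q hq
    simp only [Finset.mem_insert, Finset.mem_singleton] at hq
    rcases hq with rfl | rfl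
    · exact hpu
    · exact hpv
  have hmsK : matchedSet K = T \ ({w, u, v, z} : Finset (Fin n)) := by
    rw [hKdef, matchedSet_sdiff hA (Finset.Subset.refl A) hpair_sub, ← hT]
    congr 1
    rw [matchedSet_insert, matchedSet_singleton]
  have hms' : matchedSet (insert (u, v) (insert (w, z) K)) = T := by
    rw [matchedSet_insert, matchedSet_insert, hmsK]
    ext x
    simp only [Finset.mem_insert, Finset.mem_sdiff, Finset.mem_singleton]
    constructor
    · rintro (rfl | rfl | rfl | rfl | ⟨hx, -⟩)
      · exact huT
      · exact hvT
      · exact hwT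
      · exact hzT
      · exact hx
    · intro hx
      by_cases h1 : x = u
      · exact Or.inl h1
      by_cases h2 : x = v
      · exact Or.inr (Or.inl h2)
      by_cases h3 : x = w
      · exact Or.inr (Or.inr (Or.inl h3))
      by_cases h4 : x = z
      · exact Or.inr (Or.inr (Or.inr (Or.inl h4)))
      · exact Or.inr (Or.inr (Or.inr (Or.inr ⟨hx, by tauto⟩)))
  -- membership freshness of the new chords
  have hwzK : ((w, z) : Fin n × Fin n) ∉ K := by
    intro h
    have := eq_of_shared_endpoint hA ((hKmem _ h).1) hpu (Or.inl rfl) (Or.inl rfl)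
    have hz : z = u := congrArg Prod.snd this
    exact absurd (hz ▸ (huv.trans hvz)) (lt_irrefl u)
  have huvK : ((u, v) : Fin n × Fin n) ∉ K := by
    intro h
    have := eq_of_shared_endpoint hA ((hKmem _ h).1) hpu (Or.inl rfl) (Or.inr rfl)
    have hw : v = u := congrArg Prod.snd this
    exact absurd (hw ▸ huv) (lt_irrefl u)
  have hne_cd : ((u, v) : Fin n × Fin n) ≠ (w, z) := by
    intro h
    have h' : u = w := congrArg Prod.fst h
    rw [h'] at hwu
    exact lt_irrefl _ hwu
  have huvIns : ((u, v) : Fin n × Fin n) ∉ insert ((w, z) : Fin n × Fin n) K := by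
    intro h
    rcases Finset.mem_insert.1 h with h | h
    · exact hne_cd h
    · exact huvK h
  -- Fc computation
  have hFcA : Fc T A = Fc T K
      + ((T ∩ Finset.Ioo w u).card + (T ∩ Finset.Ioo v z).card) := by
    have := Finset.sum_sdiff (f := fun p : Fin n × Fin n => (T ∩ Finset.Ioo p.1 p.2).card)
      hpair_sub
    rw [Fc, ← this, Finset.sum_pair hnepq]
    rfl
  have hguv : (T ∩ Finset.Ioo u v).card = 0 := by rw [hadj]; rfl
  have hsplit1 : (T ∩ Finset.Ioo w z).card
      = (T ∩ Finset.Ioo w u).card + 1 + (T ∩ Finset.Ioo u z).card :=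
    Ioo_card_split hwu (huv.trans hvz) huT
  have hsplit2 : (T ∩ Finset.Ioo u z).card
      = (T ∩ Finset.Ioo u v).card + 1 + (T ∩ Finset.Ioo v z).card :=
    Ioo_card_split huv hvz hvT
  have hFcA' : Fc T (insert (u, v) (insert (w, z) K))
      = (T ∩ Finset.Ioo u v).card + ((T ∩ Finset.Ioo w z).card + Fc T K) := by
    rw [Fc_insert huvIns, Fc_insert hwzK]
  have hsdiff : K = (insert (u, v) (insert (w, z) K)) \ {((u, v) : Fin n × Fin n), (w, z)} := by
    ext r
    simp only [Finset.mem_sdiff, Finset.mem_insert, Finset.mem_singleton]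
    constructor
    · intro hr
      refine ⟨Or.inr (Or.inr hr), ?_⟩
      rintro (rfl | rfl)
      · exact huvK hr
      · exact hwzK hr
    · rintro ⟨(rfl | rfl | hr), hne⟩
      · exact absurd (Or.inl rfl) hne
      · exact absurd (Or.inr rfl) hne
      · exact hr
  refine ⟨hncpm', hms', ?_, hsdiff⟩
  rw [hFcA', hFcA]
  omega

end Surg

section SurgBC
variable {n : ℕ}
/-- Surgery, configuration (b): `pu = (w,u)`, `pv = (z,v)` with `z < w < u < v`. -/
lemma surgery_case_b {A : Finset (Fin n × Fin n)} (hA : IsNCPM n A)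
    {u v w z : Fin n} {pu pv : Fin n × Fin n}
    (hpu : pu ∈ A) (hpv : pv ∈ A) (hnepq : pu ≠ pv)
    (hpu_eq : pu = (w, u)) (hpv_eq : pv = (z, v)) (hzw : z < w)
    (huv : u < v) (hadj : matchedSet A ∩ Finset.Ioo u v = ∅) :
    IsNCPM n (insert (u, v) (insert (z, w) (A \ {pu, pv})))
    ∧ matchedSet (insert (u, v) (insert (z, w) (A \ {pu, pv}))) = matchedSet A
    ∧ Fc (matchedSet A) (insert (u, v) (insert (z, w) (A \ {pu, pv}))) % 4
        = (Fc (matchedSet A) A + 2) % 4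
    ∧ A \ {pu, pv} = (insert (u, v) (insert (z, w) (A \ {pu, pv}))) \ {(u, v), (z, w)} := by
  subst hpu_eq hpv_eq
  set T := matchedSet A with hT
  set K := A \ {((w, u) : Fin n × Fin n), (z, v)} with hKdef
  have hwu : w < u := hA.1 _ hpu
  have hzv : z < v := hA.1 _ hpv
  have hKmem : ∀ r ∈ K, r ∈ A ∧ r ≠ (w, u) ∧ r ≠ (z, v) := by
    intro r hr
    obtain ⟨h1, h2⟩ := Finset.mem_sdiff.1 hr
    simp only [Finset.mem_insert, Finset.mem_singleton] at h2
    exact ⟨h1, fun h => h2 (Or.inl h), fun h => h2 (Or.inr h)⟩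
  have hKsub : K ⊆ A := Finset.sdiff_subset
  have hKncpm : IsNCPM n K := isNCPM_subset hA hKsub
  have huT : u ∈ T := endpoint_mem_matchedSet hpu (Or.inr rfl)
  have hvT : v ∈ T := endpoint_mem_matchedSet hpv (Or.inr rfl)
  have hwT : w ∈ T := endpoint_mem_matchedSet hpu (Or.inl rfl)
  have hzT : z ∈ T := endpoint_mem_matchedSet hpv (Or.inl rfl)
  have hfree : ∀ r ∈ K, ∀ x : Fin n, (x = r.1 ∨ x = r.2) → x ≠ u ∧ x ≠ v ∧ x ≠ w ∧ x ≠ z := by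
    intro r hr x hx
    obtain ⟨hrA, hru, hrv⟩ := hKmem r hr
    refine ⟨?_, ?_, ?_, ?_⟩ <;> rintro rfl
    · exact hru (eq_of_shared_endpoint hA hrA hpu hx (Or.inr rfl))
    · exact hrv (eq_of_shared_endpoint hA hrA hpv hx (Or.inr rfl))
    · exact hru (eq_of_shared_endpoint hA hrA hpu hx (Or.inl rfl))
    · exact hrv (eq_of_shared_endpoint hA hrA hpv hx (Or.inl rfl))
  have hncpm' : IsNCPM n (insert (u, v) (insert (z, w) K)) := by
    refine isNCPM_insert2 hKncpm huv hzw ?_ ?_ ?_ ?_ ?_ ?_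
    · exact ⟨ne_of_gt (hzw.trans hwu), ne_of_gt hwu, ne_of_gt (hzw.trans (hwu.trans huv)),
        ne_of_gt (hwu.trans huv)⟩
    · intro r hr
      have h1 := hfree r hr r.1 (Or.inl rfl)
      have h2 := hfree r hr r.2 (Or.inr rfl)
      exact ⟨(h1.1 <| ·.symm), (h2.1 <| ·.symm), (h1.2.1 <| ·.symm), (h2.2.1 <| ·.symm)⟩
    · intro r hr
      have h1 := hfree r hr r.1 (Or.inl rfl)
      have h2 := hfree r hr r.2 (Or.inr rfl)
      exact ⟨(h1.2.2.2 <| ·.symm), (h2.2.2.2 <| ·.symm),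
        (h1.2.2.1 <| ·.symm), (h2.2.2.1 <| ·.symm)⟩
    · constructor
      · rintro ⟨h, -, -⟩; exact absurd ((hzw.trans hwu).trans h) (lt_irrefl _)
      · rintro ⟨-, h, -⟩; exact absurd (hwu.trans h) (lt_irrefl _)
    · intro r hr
      refine nocross_of_shield (hA.1 r (hKmem r hr).1) huv ?_
      intro x hx h1 h2
      have : x ∈ T ∩ Finset.Ioo u v := Finset.mem_inter.2
        ⟨endpoint_mem_matchedSet ((hKmem r hr).1) hx, Finset.mem_Ioo.2 ⟨h1, h2⟩⟩
      rw [hadj] at this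
      exact absurd this (Finset.notMem_empty _)
    · intro r hr
      obtain ⟨hrA, hru, hrv⟩ := hKmem r hr
      refine nocross_of_shield (hA.1 r hrA) hzw ?_
      intro x hx h1 h2
      have hxv : x < v := h2.trans (hwu.trans huv)
      have hs := shield hA hpv hrA hrv hx h1 hxv
      have hr2w : r.2 < w := by
        rcases lt_trichotomy r.2 w with hlt | heq | hgt
        · exact hlt
        · exact absurd heq ((hfree r hr r.2 (Or.inr rfl)).2.2.1)
        · exfalso
          rcases lt_trichotomy r.2 u with hlt2 | heq2 | hgt2
          · have hs2 := shield hA hpu hrA hru (Or.inr rfl) hgt hlt2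
            rcases hx with rfl | rfl
            · exact absurd (h2.trans hs2.1) (lt_irrefl _)
            · exact absurd (h2.trans hgt) (lt_irrefl _)
          · exact (hfree r hr r.2 (Or.inr rfl)).1 heq2
          · have : r.2 ∈ T ∩ Finset.Ioo u v := Finset.mem_inter.2
              ⟨endpoint_mem_matchedSet hrA (Or.inr rfl), Finset.mem_Ioo.2 ⟨hgt2, hs.2⟩⟩
            rw [hadj] at this
            exact absurd this (Finset.notMem_empty _)
      exact ⟨hs.1, hr2w⟩
  have hpair_sub : ({((w, u) : Fin n × Fin n), (z, v)} : Finset (Fin n × Fin n)) ⊆ A := by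
    intro q hq
    simp only [Finset.mem_insert, Finset.mem_singleton] at hq
    rcases hq with rfl | rfl
    · exact hpu
    · exact hpv
  have hmsK : matchedSet K = T \ ({w, u, z, v} : Finset (Fin n)) := by
    rw [hKdef, matchedSet_sdiff hA (Finset.Subset.refl A) hpair_sub, ← hT]
    congr 1
    rw [matchedSet_insert, matchedSet_singleton]
  have hms' : matchedSet (insert (u, v) (insert (z, w) K)) = T := by
    rw [matchedSet_insert, matchedSet_insert, hmsK]
    ext x
    simp only [Finset.mem_insert, Finset.mem_sdiff, Finset.mem_singleton]
    constructor
    · rintro (rfl | rfl | rfl | rfl | ⟨hx, -⟩)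
      · exact huT
      · exact hvT
      · exact hzT
      · exact hwT
      · exact hx
    · intro hx
      by_cases h1 : x = u
      · exact Or.inl h1
      by_cases h2 : x = v
      · exact Or.inr (Or.inl h2)
      by_cases h3 : x = z
      · exact Or.inr (Or.inr (Or.inl h3))
      by_cases h4 : x = w
      · exact Or.inr (Or.inr (Or.inr (Or.inl h4)))
      · exact Or.inr (Or.inr (Or.inr (Or.inr ⟨hx, by tauto⟩)))
  have hzwK : ((z, w) : Fin n × Fin n) ∉ K := by
    intro h
    have := eq_of_shared_endpoint hA ((hKmem _ h).1) hpu (Or.inr rfl) (Or.inl rfl)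
    have hz : z = w := congrArg Prod.fst this
    rw [hz] at hzw
    exact lt_irrefl _ hzw
  have huvK : ((u, v) : Fin n × Fin n) ∉ K := by
    intro h
    have := eq_of_shared_endpoint hA ((hKmem _ h).1) hpu (Or.inl rfl) (Or.inr rfl)
    have hw : u = w := congrArg Prod.fst this
    rw [hw] at hwu
    exact lt_irrefl _ hwu
  have hne_cd : ((u, v) : Fin n × Fin n) ≠ (z, w) := by
    intro h
    have h' : u = z := congrArg Prod.fst h
    rw [h'] at hwu
    exact lt_irrefl _ (hzw.trans hwu)
  have huvIns : ((u, v) : Fin n × Fin n) ∉ insert ((z, w) : Fin n × Fin n) K := by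
    intro h
    rcases Finset.mem_insert.1 h with h | h
    · exact hne_cd h
    · exact huvK h
  have hFcA : Fc T A = Fc T K
      + ((T ∩ Finset.Ioo w u).card + (T ∩ Finset.Ioo z v).card) := by
    have := Finset.sum_sdiff (f := fun p : Fin n × Fin n => (T ∩ Finset.Ioo p.1 p.2).card)
      hpair_sub
    rw [Fc, ← this, Finset.sum_pair hnepq]
    rfl
  have hguv : (T ∩ Finset.Ioo u v).card = 0 := by rw [hadj]; rfl
  have hsplit1 : (T ∩ Finset.Ioo z v).card
      = (T ∩ Finset.Ioo z w).card + 1 + (T ∩ Finset.Ioo w v).card :=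
    Ioo_card_split hzw (hwu.trans huv) hwT
  have hsplit2 : (T ∩ Finset.Ioo w v).card
      = (T ∩ Finset.Ioo w u).card + 1 + (T ∩ Finset.Ioo u v).card :=
    Ioo_card_split hwu huv huT
  have heven : (T ∩ Finset.Ioo w u).card % 2 = 0 := by
    have h := interior_even hA hpu
    rw [← hT] at h
    dsimp only at h
    omega
  have hFcA' : Fc T (insert (u, v) (insert (z, w) K))
      = (T ∩ Finset.Ioo u v).card + ((T ∩ Finset.Ioo z w).card + Fc T K) := by
    rw [Fc_insert huvIns, Fc_insert hzwK]
  have hsdiff : K = (insert (u, v) (insert (z, w) K)) \ {((u, v) : Fin n × Fin n), (z, w)} := by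
    ext r
    simp only [Finset.mem_sdiff, Finset.mem_insert, Finset.mem_singleton]
    constructor
    · intro hr
      refine ⟨Or.inr (Or.inr hr), ?_⟩
      rintro (rfl | rfl)
      · exact huvK hr
      · exact hzwK hr
    · rintro ⟨(rfl | rfl | hr), hne⟩
      · exact absurd (Or.inl rfl) hne
      · exact absurd (Or.inr rfl) hne
      · exact hr
  refine ⟨hncpm', hms', ?_, hsdiff⟩
  rw [hFcA', hFcA, hguv, hsplit1, hsplit2]
  omega

/-- Surgery, configuration (c): `pu = (u,w)`, `pv = (v,z)` with `u < v < z < w`. -/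
lemma surgery_case_c {A : Finset (Fin n × Fin n)} (hA : IsNCPM n A)
    {u v w z : Fin n} {pu pv : Fin n × Fin n}
    (hpu : pu ∈ A) (hpv : pv ∈ A) (hnepq : pu ≠ pv)
    (hpu_eq : pu = (u, w)) (hpv_eq : pv = (v, z)) (hzw : z < w)
    (huv : u < v) (hadj : matchedSet A ∩ Finset.Ioo u v = ∅) :
    IsNCPM n (insert (u, v) (insert (z, w) (A \ {pu, pv})))
    ∧ matchedSet (insert (u, v) (insert (z, w) (A \ {pu, pv}))) = matchedSet A
    ∧ Fc (matchedSet A) (insert (u, v) (insert (z, w) (A \ {pu, pv}))) % 4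
        = (Fc (matchedSet A) A + 2) % 4
    ∧ A \ {pu, pv} = (insert (u, v) (insert (z, w) (A \ {pu, pv}))) \ {(u, v), (z, w)} := by
  subst hpu_eq hpv_eq
  set T := matchedSet A with hT
  set K := A \ {((u, w) : Fin n × Fin n), (v, z)} with hKdef
  have huw : u < w := hA.1 _ hpu
  have hvz : v < z := hA.1 _ hpv
  have hKmem : ∀ r ∈ K, r ∈ A ∧ r ≠ (u, w) ∧ r ≠ (v, z) := by
    intro r hr
    obtain ⟨h1, h2⟩ := Finset.mem_sdiff.1 hr
    simp only [Finset.mem_insert, Finset.mem_singleton] at h2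
    exact ⟨h1, fun h => h2 (Or.inl h), fun h => h2 (Or.inr h)⟩
  have hKsub : K ⊆ A := Finset.sdiff_subset
  have hKncpm : IsNCPM n K := isNCPM_subset hA hKsub
  have huT : u ∈ T := endpoint_mem_matchedSet hpu (Or.inl rfl)
  have hvT : v ∈ T := endpoint_mem_matchedSet hpv (Or.inl rfl)
  have hwT : w ∈ T := endpoint_mem_matchedSet hpu (Or.inr rfl)
  have hzT : z ∈ T := endpoint_mem_matchedSet hpv (Or.inr rfl)
  have hfree : ∀ r ∈ K, ∀ x : Fin n, (x = r.1 ∨ x = r.2) → x ≠ u ∧ x ≠ v ∧ x ≠ w ∧ x ≠ z := by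
    intro r hr x hx
    obtain ⟨hrA, hru, hrv⟩ := hKmem r hr
    refine ⟨?_, ?_, ?_, ?_⟩ <;> rintro rfl
    · exact hru (eq_of_shared_endpoint hA hrA hpu hx (Or.inl rfl))
    · exact hrv (eq_of_shared_endpoint hA hrA hpv hx (Or.inl rfl))
    · exact hru (eq_of_shared_endpoint hA hrA hpu hx (Or.inr rfl))
    · exact hrv (eq_of_shared_endpoint hA hrA hpv hx (Or.inr rfl))
  have hncpm' : IsNCPM n (insert (u, v) (insert (z, w) K)) := by
    refine isNCPM_insert2 hKncpm huv hzw ?_ ?_ ?_ ?_ ?_ ?_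
    · exact ⟨ne_of_lt (huv.trans hvz), ne_of_lt (huv.trans (hvz.trans hzw)),
        ne_of_lt hvz, ne_of_lt (hvz.trans hzw)⟩
    · intro r hr
      have h1 := hfree r hr r.1 (Or.inl rfl)
      have h2 := hfree r hr r.2 (Or.inr rfl)
      exact ⟨(h1.1 <| ·.symm), (h2.1 <| ·.symm), (h1.2.1 <| ·.symm), (h2.2.1 <| ·.symm)⟩
    · intro r hr
      have h1 := hfree r hr r.1 (Or.inl rfl)
      have h2 := hfree r hr r.2 (Or.inr rfl)
      exact ⟨(h1.2.2.2 <| ·.symm), (h2.2.2.2 <| ·.symm),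
        (h1.2.2.1 <| ·.symm), (h2.2.2.1 <| ·.symm)⟩
    · constructor
      · rintro ⟨-, h, -⟩; exact absurd (hvz.trans h) (lt_irrefl _)
      · rintro ⟨h, -, -⟩; exact absurd (h.trans (huv.trans hvz)) (lt_irrefl _)
    · intro r hr
      refine nocross_of_shield (hA.1 r (hKmem r hr).1) huv ?_
      intro x hx h1 h2
      have : x ∈ T ∩ Finset.Ioo u v := Finset.mem_inter.2
        ⟨endpoint_mem_matchedSet ((hKmem r hr).1) hx, Finset.mem_Ioo.2 ⟨h1, h2⟩⟩
      rw [hadj] at this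
      exact absurd this (Finset.notMem_empty _)
    · intro r hr
      obtain ⟨hrA, hru, hrv⟩ := hKmem r hr
      refine nocross_of_shield (hA.1 r hrA) hzw ?_
      intro x hx h1 h2
      have hxu : u < x := huv.trans (hvz.trans h1)
      have hs := shield hA hpu hrA hru hx hxu h2
      have hr1z : z < r.1 := by
        rcases lt_trichotomy z r.1 with hlt | heq | hgt
        · exact hlt
        · exact absurd heq.symm ((hfree r hr r.1 (Or.inl rfl)).2.2.2)
        · exfalso
          rcases lt_trichotomy r.1 v with hlt2 | heq2 | hgt2
          · have : r.1 ∈ T ∩ Finset.Ioo u v := Finset.mem_inter.2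
              ⟨endpoint_mem_matchedSet hrA (Or.inl rfl), Finset.mem_Ioo.2 ⟨hs.1, hlt2⟩⟩
            rw [hadj] at this
            exact absurd this (Finset.notMem_empty _)
          · exact (hfree r hr r.1 (Or.inl rfl)).2.1 heq2
          · have hs2 := shield hA hpv hrA hrv (Or.inl rfl) hgt2 hgt
            rcases hx with rfl | rfl
            · exact absurd (h1.trans hgt) (lt_irrefl _)
            · exact absurd (h1.trans hs2.2) (lt_irrefl _)
      exact ⟨hr1z, hs.2⟩
  have hpair_sub : ({((u, w) : Fin n × Fin n), (v, z)} : Finset (Fin n × Fin n)) ⊆ A := by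
    intro q hq
    simp only [Finset.mem_insert, Finset.mem_singleton] at hq
    rcases hq with rfl | rfl
    · exact hpu
    · exact hpv
  have hmsK : matchedSet K = T \ ({u, w, v, z} : Finset (Fin n)) := by
    rw [hKdef, matchedSet_sdiff hA (Finset.Subset.refl A) hpair_sub, ← hT]
    congr 1
    rw [matchedSet_insert, matchedSet_singleton]
  have hms' : matchedSet (insert (u, v) (insert (z, w) K)) = T := by
    rw [matchedSet_insert, matchedSet_insert, hmsK]
    ext x
    simp only [Finset.mem_insert, Finset.mem_sdiff, Finset.mem_singleton]
    constructor
    · rintro (rfl | rfl | rfl | rfl | ⟨hx, -⟩)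
      · exact huT
      · exact hvT
      · exact hzT
      · exact hwT
      · exact hx
    · intro hx
      by_cases h1 : x = u
      · exact Or.inl h1
      by_cases h2 : x = v
      · exact Or.inr (Or.inl h2)
      by_cases h3 : x = z
      · exact Or.inr (Or.inr (Or.inl h3))
      by_cases h4 : x = w
      · exact Or.inr (Or.inr (Or.inr (Or.inl h4)))
      · exact Or.inr (Or.inr (Or.inr (Or.inr ⟨hx, by tauto⟩)))
  have hzwK : ((z, w) : Fin n × Fin n) ∉ K := by
    intro h
    have := eq_of_shared_endpoint hA ((hKmem _ h).1) hpu (Or.inr rfl) (Or.inr rfl)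
    have hz : z = u := congrArg Prod.fst this
    rw [hz] at hvz
    exact lt_irrefl _ (huv.trans hvz)
  have huvK : ((u, v) : Fin n × Fin n) ∉ K := by
    intro h
    have := eq_of_shared_endpoint hA ((hKmem _ h).1) hpu (Or.inl rfl) (Or.inl rfl)
    have hw : v = w := congrArg Prod.snd this
    rw [hw] at hvz
    exact lt_irrefl _ (hvz.trans hzw)
  have hne_cd : ((u, v) : Fin n × Fin n) ≠ (z, w) := by
    intro h
    have h' : u = z := congrArg Prod.fst h
    rw [h'] at huv
    exact lt_irrefl _ (huv.trans hvz)
  have huvIns : ((u, v) : Fin n × Fin n) ∉ insert ((z, w) : Fin n × Fin n) K := by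
    intro h
    rcases Finset.mem_insert.1 h with h | h
    · exact hne_cd h
    · exact huvK h
  have hFcA : Fc T A = Fc T K
      + ((T ∩ Finset.Ioo u w).card + (T ∩ Finset.Ioo v z).card) := by
    have := Finset.sum_sdiff (f := fun p : Fin n × Fin n => (T ∩ Finset.Ioo p.1 p.2).card)
      hpair_sub
    rw [Fc, ← this, Finset.sum_pair hnepq]
    rfl
  have hguv : (T ∩ Finset.Ioo u v).card = 0 := by rw [hadj]; rfl
  have hsplit1 : (T ∩ Finset.Ioo u w).card
      = (T ∩ Finset.Ioo u v).card + 1 + (T ∩ Finset.Ioo v w).card :=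
    Ioo_card_split huv (hvz.trans hzw) hvT
  have hsplit2 : (T ∩ Finset.Ioo v w).card
      = (T ∩ Finset.Ioo v z).card + 1 + (T ∩ Finset.Ioo z w).card :=
    Ioo_card_split hvz hzw hzT
  have heven : (T ∩ Finset.Ioo v z).card % 2 = 0 := by
    have h := interior_even hA hpv
    rw [← hT] at h
    dsimp only at h
    omega
  have hFcA' : Fc T (insert (u, v) (insert (z, w) K))
      = (T ∩ Finset.Ioo u v).card + ((T ∩ Finset.Ioo z w).card + Fc T K) := by
    rw [Fc_insert huvIns, Fc_insert hzwK]
  have hsdiff : K = (insert (u, v) (insert (z, w) K)) \ {((u, v) : Fin n × Fin n), (z, w)} := by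
    ext r
    simp only [Finset.mem_sdiff, Finset.mem_insert, Finset.mem_singleton]
    constructor
    · intro hr
      refine ⟨Or.inr (Or.inr hr), ?_⟩
      rintro (rfl | rfl)
      · exact huvK hr
      · exact hzwK hr
    · rintro ⟨(rfl | rfl | hr), hne⟩
      · exact absurd (Or.inl rfl) hne
      · exact absurd (Or.inr rfl) hne
      · exact hr
  refine ⟨hncpm', hms', ?_, hsdiff⟩
  rw [hFcA', hFcA, hguv, hsplit1, hsplit2]
  omega

end SurgBC
section MainAux
variable {n : ℕ}
lemma matchedSet_empty : matchedSet (∅ : Finset (Fin n × Fin n)) = ∅ := by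
  simp [matchedSet]

lemma eq_empty_of_ms {A : Finset (Fin n × Fin n)} (h : matchedSet A = ∅) : A = ∅ := by
  rcases Finset.eq_empty_or_nonempty A with h' | ⟨p, hp⟩
  · exact h'
  · have := endpoint_mem_matchedSet hp (Or.inl rfl)
    rw [h] at this
    exact absurd this (Finset.notMem_empty _)

open scoped Classical in
lemma cyclesCount_empty : cyclesCount (∅ : Finset (Fin n × Fin n)) ∅ = 0 := by
  rw [cyclesCount_eq]
  rw [Finset.powerset_empty, Finset.filter_singleton]
  simp [Finset.not_nonempty_empty]

lemma Fc_empty {T : Finset (Fin n)} : Fc T (∅ : Finset (Fin n × Fin n)) = 0 :=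
  Finset.sum_empty

lemma card_sdiff_surgery {A B : Finset (Fin n × Fin n)} {pu pv c q' : Fin n × Fin n}
    (hpu : pu ∈ A) (hpv : pv ∈ A) (hne : pu ≠ pv) (hpuB : pu ∉ B) (hpvB : pv ∉ B)
    (hcB : c ∈ B) :
    ((insert c (insert q' (A \ {pu, pv}))) \ B).card + 1 ≤ (A \ B).card := by
  have hsub : (insert c (insert q' (A \ {pu, pv}))) \ B ⊆ insert q' ((A \ B) \ {pu, pv}) := by
    intro r hr
    obtain ⟨hr1, hr2⟩ := Finset.mem_sdiff.1 hr
    rcases Finset.mem_insert.1 hr1 with rfl | hr1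
    · exact absurd hcB hr2
    rcases Finset.mem_insert.1 hr1 with rfl | hr1
    · exact Finset.mem_insert_self _ _
    · obtain ⟨hrA, hrp⟩ := Finset.mem_sdiff.1 hr1
      exact Finset.mem_insert_of_mem
        (Finset.mem_sdiff.2 ⟨Finset.mem_sdiff.2 ⟨hrA, hr2⟩, hrp⟩)
  have hpair : ({pu, pv} : Finset (Fin n × Fin n)) ⊆ A \ B := by
    intro r hr
    rcases Finset.mem_insert.1 hr with rfl | hr
    · exact Finset.mem_sdiff.2 ⟨hpu, hpuB⟩
    · rw [Finset.mem_singleton.1 hr]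
      exact Finset.mem_sdiff.2 ⟨hpv, hpvB⟩
  have hpc : ({pu, pv} : Finset (Fin n × Fin n)).card = 2 := by
    rw [Finset.card_insert_of_notMem (by simpa using hne), Finset.card_singleton]
  have h1 : ((A \ B) \ {pu, pv}).card = (A \ B).card - 2 := by
    rw [Finset.card_sdiff_of_subset hpair, hpc]
  have h2 : 2 ≤ (A \ B).card := hpc ▸ Finset.card_le_card hpair
  have h3 := (Finset.card_le_card hsub).trans (Finset.card_insert_le _ _)
  omega

/-- The key parity statement, by induction on `|T| + |A \ B|`. -/
theorem key_parity : ∀ (N : ℕ) (A B : Finset (Fin n × Fin n)), IsNCPM n A → IsNCPM n B →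
    matchedSet A = matchedSet B → (matchedSet A).card + (A \ B).card ≤ N →
    (2 * cyclesCount A B + Fc (matchedSet A) A + Fc (matchedSet A) B) % 4
      = (matchedSet A).card % 4 := by
  intro N
  induction N with
  | zero =>
    intro A B hA hB hms hle
    have h0 : (matchedSet A).card = 0 := by omega
    have hAe : A = ∅ := eq_empty_of_ms (Finset.card_eq_zero.1 h0)
    have hBe : B = ∅ := eq_empty_of_ms (by rw [← hms]; exact Finset.card_eq_zero.1 h0)
    subst hAe hBe
    rw [cyclesCount_empty, Fc_empty, matchedSet_empty]
    simp
  | succ N ih =>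
    intro A B hA hB hms hle
    rcases Finset.eq_empty_or_nonempty (matchedSet A) with hTe | hTne
    · have hAe : A = ∅ := eq_empty_of_ms hTe
      have hBe : B = ∅ := eq_empty_of_ms (hms ▸ hTe)
      subst hAe hBe
      rw [cyclesCount_empty, Fc_empty, matchedSet_empty]
      simp
    · have hBne : B.Nonempty := by
        obtain ⟨x, hx⟩ := hTne
        rw [hms] at hx
        obtain ⟨p, hp, -⟩ := mem_matchedSet.1 hx
        exact ⟨p, hp⟩
      obtain ⟨p, hpB, hadjB⟩ := exists_adjacent hB hBne
      have hadjA : matchedSet A ∩ Finset.Ioo p.1 p.2 = ∅ := by rw [hms]; exact hadjB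
      have hpuv : p.1 < p.2 := hB.1 p hpB
      have hp1T : p.1 ∈ matchedSet A := by
        rw [hms]; exact endpoint_mem_matchedSet hpB (Or.inl rfl)
      have hp2T : p.2 ∈ matchedSet A := by
        rw [hms]; exact endpoint_mem_matchedSet hpB (Or.inr rfl)
      by_cases hpA : p ∈ A
      · -- common chord case
        have hAe : IsNCPM n (A.erase p) := isNCPM_subset hA (Finset.erase_subset _ _)
        have hBe : IsNCPM n (B.erase p) := isNCPM_subset hB (Finset.erase_subset _ _)
        have hmsAe : matchedSet (A.erase p) = matchedSet A \ {p.1, p.2} := by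
          rw [Finset.erase_eq,
            matchedSet_sdiff hA (Finset.Subset.refl A) (Finset.singleton_subset_iff.2 hpA),
            matchedSet_singleton]
        have hmsBe : matchedSet (B.erase p) = matchedSet A \ {p.1, p.2} := by
          rw [Finset.erase_eq,
            matchedSet_sdiff hB (Finset.Subset.refl B) (Finset.singleton_subset_iff.2 hpB),
            matchedSet_singleton, hms]
        have hmseq : matchedSet (A.erase p) = matchedSet (B.erase p) := by
          rw [hmsAe, hmsBe]
        have hdiffeq : (A.erase p) \ (B.erase p) = A \ B := by
          ext r
          simp only [Finset.mem_sdiff, Finset.mem_erase]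
          constructor
          · rintro ⟨⟨hne, hrA⟩, hnB⟩
            exact ⟨hrA, fun hrB => hnB ⟨hne, hrB⟩⟩
          · rintro ⟨hrA, hnB⟩
            refine ⟨⟨?_, hrA⟩, fun h => hnB h.2⟩
            rintro rfl
            exact hnB hpB
        have hpair_sub : ({p.1, p.2} : Finset (Fin n)) ⊆ matchedSet A := by
          intro x hx
          rcases Finset.mem_insert.1 hx with rfl | hx
          · exact hp1T
          · rw [Finset.mem_singleton.1 hx]; exact hp2T
        have hpc : ({p.1, p.2} : Finset (Fin n)).card = 2 := by
          rw [Finset.card_insert_of_notMem (by simpa using (ne_of_lt hpuv)),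
            Finset.card_singleton]
        have hTcard : (matchedSet A \ {p.1, p.2}).card = (matchedSet A).card - 2 := by
          rw [Finset.card_sdiff_of_subset hpair_sub, hpc]
        have hT2 : 2 ≤ (matchedSet A).card := hpc ▸ Finset.card_le_card hpair_sub
        have hle' : (matchedSet (A.erase p)).card + ((A.erase p) \ (B.erase p)).card ≤ N := by
          rw [hmsAe, hdiffeq, hTcard]
          omega
        have hIH := ih (A.erase p) (B.erase p) hAe hBe hmseq hle'
        rw [hmsAe] at hIH
        have hcc := cyclesCount_common hA hB hpA hpB
        have hFa := Fc_shrink hA hpA hadjA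
        have hFb := Fc_shrink hB hpB hadjB
        rw [← hms] at hFb
        have hcova := cov_parity hA hpA
        have hcovb := cov_parity hB hpB
        rw [← hms] at hcovb
        rw [hTcard] at hIH
        omega
      · -- surgery case
        obtain ⟨pu, hpu, hu⟩ := mem_matchedSet.1 hp1T
        obtain ⟨pv, hpv, hv⟩ := mem_matchedSet.1 hp2T
        have hnepq : pu ≠ pv := by
          rintro rfl
          rcases hu with hu | hu <;> rcases hv with hv | hv
          · have h := hpuv; rw [hu, hv] at h; exact lt_irrefl _ h
          · exact hpA ((Prod.ext hu.symm hv.symm) ▸ hpu)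
          · have h1 := hA.1 pu hpu
            rw [← hu, ← hv] at h1
            exact absurd (hpuv.trans h1) (lt_irrefl _)
          · have h := hpuv; rw [hu, hv] at h; exact lt_irrefl _ h
        have hpuB : pu ∉ B := by
          intro h
          have heq : pu = p := eq_of_shared_endpoint hB h hpB hu (Or.inl rfl)
          exact hpA (heq ▸ hpu)
        have hpvB : pv ∉ B := by
          intro h
          have heq : pv = p := eq_of_shared_endpoint hB h hpB hv (Or.inr rfl)
          exact hpA (heq ▸ hpv)
        have hpeta : ((p.1, p.2) : Fin n × Fin n) = p := rfl
        rcases hu with hu | hu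
        · -- p.1 = pu.1 : partner of p.1 lies to the right of p.2
          have hwne2 : pu.2 ≠ p.2 := by
            intro h
            exact hpA ((Prod.ext hu.symm h) ▸ hpu)
          have hw1 : p.1 < pu.2 := by
            have := hA.1 pu hpu; rwa [← hu] at this
          have hwT : pu.2 ∈ matchedSet A := endpoint_mem_matchedSet hpu (Or.inr rfl)
          have hw2 : p.2 < pu.2 := by
            rcases lt_trichotomy pu.2 p.2 with h | h | h
            · exfalso
              have : pu.2 ∈ matchedSet A ∩ Finset.Ioo p.1 p.2 :=
                Finset.mem_inter.2 ⟨hwT, Finset.mem_Ioo.2 ⟨hw1, h⟩⟩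
              rw [hadjA] at this
              exact absurd this (Finset.notMem_empty _)
            · exact absurd h hwne2
            · exact h
          rcases hv with hv | hv
          · -- p.2 = pv.1 : configuration (c)
            have hz : p.2 < pv.2 := by
              have := hA.1 pv hpv; rwa [← hv] at this
            have hzw : pv.2 < pu.2 := by
              rcases lt_trichotomy pv.2 pu.2 with h | h | h
              · exact h
              · exact absurd (eq_of_shared_endpoint hA hpu hpv (Or.inr rfl) (Or.inr h.symm))
                  hnepq
              · exfalso
                have c1 : pu.1 < pv.1 := by rw [← hu, ← hv]; exact hpuv
                have c2 : pv.1 < pu.2 := by rw [← hv]; exact hw2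
                exact hA.2.2 pu hpu pv hpv ⟨c1, c2, h⟩
            have hpu_eq : pu = (p.1, pu.2) := Prod.ext hu.symm rfl
            have hpv_eq : pv = (p.2, pv.2) := Prod.ext hv.symm rfl
            obtain ⟨hA', hms', hFc4, hsdiff⟩ :=
              surgery_case_c hA hpu hpv hnepq hpu_eq hpv_eq hzw hpuv hadjA
            have hq'uv : ((pv.2, pu.2) : Fin n × Fin n) ≠ (p.1, p.2) := by
              intro h
              injection h with h1 h2
              rw [h1] at hz
              exact lt_irrefl _ (hpuv.trans hz)
            have hcc := cyclesCount_surgery hA hA' hB hms (hms'.trans hms)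
              (hpeta ▸ hpB) hpu (Or.inl hu) hpv (Or.inl hv)
              (Finset.mem_insert_self _ _)
              (Finset.mem_insert_of_mem (Finset.mem_insert_self _ _)) hq'uv hsdiff
            have hmeas := card_sdiff_surgery (c := ((p.1, p.2) : Fin n × Fin n))
              (q' := ((pv.2, pu.2) : Fin n × Fin n)) hpu hpv hnepq hpuB hpvB (hpeta ▸ hpB)
            have hIH := ih _ B hA' hB (hms'.trans hms) (by rw [hms']; omega)
            rw [hms'] at hIH
            omega
          · -- p.2 = pv.2 : impossible (crossing)
            exfalso
            have hzne : pv.1 ≠ p.1 := by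
              intro h
              exact hnepq (eq_of_shared_endpoint hA hpv hpu (Or.inl h.symm) (Or.inl hu)).symm
            have hz2 : pv.1 < p.2 := by
              have := hA.1 pv hpv; rwa [← hv] at this
            have hzT : pv.1 ∈ matchedSet A := endpoint_mem_matchedSet hpv (Or.inl rfl)
            have hz1 : pv.1 < p.1 := by
              rcases lt_trichotomy pv.1 p.1 with h | h | h
              · exact h
              · exact absurd h hzne
              · exfalso
                have : pv.1 ∈ matchedSet A ∩ Finset.Ioo p.1 p.2 :=
                  Finset.mem_inter.2 ⟨hzT, Finset.mem_Ioo.2 ⟨h, hz2⟩⟩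
                rw [hadjA] at this
                exact absurd this (Finset.notMem_empty _)
            have c2 : pu.1 < pv.2 := by rw [← hu, ← hv]; exact hpuv
            have c3 : pv.2 < pu.2 := by rw [← hv]; exact hw2
            exact hA.2.2 pv hpv pu hpu ⟨by rw [← hu]; exact hz1, c2, c3⟩
        · -- p.1 = pu.2 : partner of p.1 lies to the left
          have hw1 : pu.1 < p.1 := by
            have := hA.1 pu hpu; rwa [← hu] at this
          rcases hv with hv | hv
          · -- p.2 = pv.1 : configuration (a)
            have hz : p.2 < pv.2 := by
              have := hA.1 pv hpv; rwa [← hv] at this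
            have hpu_eq : pu = (pu.1, p.1) := Prod.ext rfl hu.symm
            have hpv_eq : pv = (p.2, pv.2) := Prod.ext hv.symm rfl
            obtain ⟨hA', hms', hFcEq, hsdiff⟩ :=
              surgery_case_a hA hpu hpv hnepq hpu_eq hpv_eq hpuv hadjA
            have hFc4 : Fc (matchedSet A)
                (insert (p.1, p.2) (insert (pu.1, pv.2) (A \ {pu, pv}))) % 4
                = (Fc (matchedSet A) A + 2) % 4 := by rw [hFcEq]
            have hq'uv : ((pu.1, pv.2) : Fin n × Fin n) ≠ (p.1, p.2) := by
              intro h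
              injection h with h1 h2
              rw [h1] at hw1
              exact lt_irrefl _ hw1
            have hcc := cyclesCount_surgery hA hA' hB hms (hms'.trans hms)
              (hpeta ▸ hpB) hpu (Or.inr hu) hpv (Or.inl hv)
              (Finset.mem_insert_self _ _)
              (Finset.mem_insert_of_mem (Finset.mem_insert_self _ _)) hq'uv hsdiff
            have hmeas := card_sdiff_surgery (c := ((p.1, p.2) : Fin n × Fin n))
              (q' := ((pu.1, pv.2) : Fin n × Fin n)) hpu hpv hnepq hpuB hpvB (hpeta ▸ hpB)
            have hIH := ih _ B hA' hB (hms'.trans hms) (by rw [hms']; omega)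
            rw [hms'] at hIH
            omega
          · -- p.2 = pv.2 : configuration (b)
            have hzne : pv.1 ≠ p.1 := by
              intro h
              exact hnepq (eq_of_shared_endpoint hA hpv hpu (Or.inl h.symm) (Or.inr hu)).symm
            have hz2 : pv.1 < p.2 := by
              have := hA.1 pv hpv; rwa [← hv] at this
            have hzT : pv.1 ∈ matchedSet A := endpoint_mem_matchedSet hpv (Or.inl rfl)
            have hz1 : pv.1 < p.1 := by
              rcases lt_trichotomy pv.1 p.1 with h | h | h
              · exact h
              · exact absurd h hzne
              · exfalso
                have : pv.1 ∈ matchedSet A ∩ Finset.Ioo p.1 p.2 :=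
                  Finset.mem_inter.2 ⟨hzT, Finset.mem_Ioo.2 ⟨h, hz2⟩⟩
                rw [hadjA] at this
                exact absurd this (Finset.notMem_empty _)
            have hzw : pv.1 < pu.1 := by
              rcases lt_trichotomy pv.1 pu.1 with h | h | h
              · exact h
              · exact absurd (eq_of_shared_endpoint hA hpv hpu (Or.inl rfl) (Or.inl h))
                  (Ne.symm hnepq)
              · exfalso
                have c2 : pv.1 < pu.2 := by rw [← hu]; exact hz1
                have c3 : pu.2 < pv.2 := by rw [← hu, ← hv]; exact hpuv
                exact hA.2.2 pu hpu pv hpv ⟨h, c2, c3⟩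
            have hpu_eq : pu = (pu.1, p.1) := Prod.ext rfl hu.symm
            have hpv_eq : pv = (pv.1, p.2) := Prod.ext rfl hv.symm
            obtain ⟨hA', hms', hFc4, hsdiff⟩ :=
              surgery_case_b hA hpu hpv hnepq hpu_eq hpv_eq hzw hpuv hadjA
            have hq'uv : ((pv.1, pu.1) : Fin n × Fin n) ≠ (p.1, p.2) := by
              intro h
              injection h with h1 h2
              exact hzne h1
            have hcc := cyclesCount_surgery hA hA' hB hms (hms'.trans hms)
              (hpeta ▸ hpB) hpu (Or.inr hu) hpv (Or.inr hv)
              (Finset.mem_insert_self _ _)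
              (Finset.mem_insert_of_mem (Finset.mem_insert_self _ _)) hq'uv hsdiff
            have hmeas := card_sdiff_surgery (c := ((p.1, p.2) : Fin n × Fin n))
              (q' := ((pv.1, pu.1) : Fin n × Fin n)) hpu hpv hnepq hpuB hpvB (hpeta ▸ hpB)
            have hIH := ih _ B hA' hB (hms'.trans hms) (by rw [hms']; omega)
            rw [hms'] at hIH
            omega

end MainAux
lemma negpow {a b : ℕ} (h : a % 2 = b % 2) : ((-1 : ℤ)) ^ a = (-1) ^ b := by
  rcases Nat.even_or_odd a with ha | ha
  · have hb : Even b := Nat.even_iff.2 (by have := Nat.even_iff.1 ha; omega)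
    rw [ha.neg_one_pow, hb.neg_one_pow]
  · have hb : Odd b := Nat.odd_iff.2 (by have := Nat.odd_iff.1 ha; omega)
    rw [ha.neg_one_pow, hb.neg_one_pow]


end AuxDev

/-- For non-crossing perfect matchings `M, M′, M″` of a set `S` of size
`2k`, one has `c(M,M′) + c(M′,M″) ≡ c(M,M″) + k (mod 2)`; consequently, fixing any
non-crossing perfect matching `M₀` of `S` and setting `ε_M = (−1)^{c(M,M₀)}`, one has
`(−1)^{c(M,M′)} = (−1)^k · ε_M · ε_{M′}`. -/
theorem cyclesCount_mod_two (n k : ℕ) (S : Finset (Fin n)) (hS : S.card = 2 * k) :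
    (∀ M M' M'' : NCPM n,
        matchedSet M.1 = S → matchedSet M'.1 = S → matchedSet M''.1 = S →
          (cyclesCount M.1 M'.1 + cyclesCount M'.1 M''.1) % 2
            = (cyclesCount M.1 M''.1 + k) % 2) ∧
      ∀ M₀ M M' : NCPM n,
        matchedSet M₀.1 = S → matchedSet M.1 = S → matchedSet M'.1 = S →
          (-1 : ℤ) ^ cyclesCount M.1 M'.1
            = (-1) ^ k * (-1) ^ cyclesCount M.1 M₀.1 * (-1) ^ cyclesCount M'.1 M₀.1 := by
  have hkey : ∀ M M' : NCPM n, matchedSet M.1 = S → matchedSet M'.1 = S →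
      (2 * cyclesCount M.1 M'.1 + Fc S M.1 + Fc S M'.1) % 4 = S.card % 4 := by
    intro M M' h1 h2
    have h := key_parity ((matchedSet M.1).card + (M.1 \ M'.1).card) M.1 M'.1 M.2 M'.2
      (h1.trans h2.symm) le_rfl
    rw [h1] at h
    exact h
  have hFeven : ∀ M : NCPM n, matchedSet M.1 = S → Fc S M.1 % 2 = 0 := by
    intro M h
    have := Fc_even M.2
    rwa [h] at this
  have hfirst : ∀ M M' M'' : NCPM n,
      matchedSet M.1 = S → matchedSet M'.1 = S → matchedSet M''.1 = S →
        (cyclesCount M.1 M'.1 + cyclesCount M'.1 M''.1) % 2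
          = (cyclesCount M.1 M''.1 + k) % 2 := by
    intro M M' M'' h1 h2 h3
    have k1 := hkey M M' h1 h2
    have k2 := hkey M' M'' h2 h3
    have k3 := hkey M M'' h1 h3
    have e2 := hFeven M' h2
    omega
  refine ⟨hfirst, ?_⟩
  intro M₀ M M' h0 h1 h2
  have hpar := hfirst M M' M₀ h1 h2 h0
  have hmod : cyclesCount M.1 M'.1 % 2
      = (k + cyclesCount M.1 M₀.1 + cyclesCount M'.1 M₀.1) % 2 := by omega
  rw [← pow_add, ← pow_add]
  exact negpow hmod
end

section
/- m(X₊, X₋) = m(X₋, X₊) = e_{{1,4},{2,3}} in P_4, where e_{{1,4},{2,3}} is the identity diagram of two parallel strands joining 1 to 4 and 2 to 3. (This is Reidemeister II for the paper's crossing expansions: stacking a positive crossing and a negative crossing of two parallel strands yields the identity tangle.) -/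
open Finset LaurentPolynomial

/-- The multigraph with (ordered-pair) edge set `E` contains a cycle: equivalently, some
nonempty sub-multigraph has minimum degree at least `2` at every vertex it meets. -/
def HasCycleE {V : Type*} [DecidableEq V] (E : Finset (V × V)) : Prop :=
  ∃ F ⊆ E, F.Nonempty ∧ ∀ v ∈ matchedSet F, 2 ≤ (F.filter fun p => p.1 = v ∨ p.2 = v).card

/-- Two vertices are joined by a path in the graph with edge set `E`. -/
def Conn {V : Type*} (E : Finset (V × V)) : V → V → Prop :=
  Relation.ReflTransGen fun x y => (x, y) ∈ E ∨ (y, x) ∈ E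

/-- The positive crossing `X₊ ∈ P₄` (points `0,1,2,3` in circular order: `0` = bottom-left,
`1` = bottom-right, `2` = top-right, `3` = top-left):
`X₊ = q·v_{{04},{12}} + (q−q⁻¹)·v_{{03}} + q·v_{{13}} + q⁻¹·v_{{02}} − q⁻¹·v_∅`
(in the paper's 1-indexed notation
`X₊ = q·v_{{1,4},{2,3}} + (q−q⁻¹)·v_{{1,4}} + q·v_{{2,4}} + q⁻¹·v_{{1,3}} − q⁻¹·v_∅`). -/
noncomputable def Xpos : Pn 4 :=
  (T 1 : R) • dotted ⟨{(0, 3), (1, 2)}, by decide⟩ +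
    ((T 1 - T (-1) : R)) • dotted ⟨{(0, 3)}, by decide⟩ +
    (T 1 : R) • dotted ⟨{(1, 3)}, by decide⟩ +
    (T (-1) : R) • dotted ⟨{(0, 2)}, by decide⟩ -
    (T (-1) : R) • dotted ⟨(∅ : Finset (Fin 4 × Fin 4)), by decide⟩

/-- The negative crossing
`X₋ = q⁻¹·v_{{1,4},{2,3}} + (q⁻¹−q)·v_{{2,3}} + q⁻¹·v_{{1,3}} + q·v_{{2,4}} − q·v_∅`
(paper's 1-indexed notation), written with 0-indexed points. -/
noncomputable def Xneg : Pn 4 :=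
  (T (-1) : R) • dotted ⟨{(0, 3), (1, 2)}, by decide⟩ +
    ((T (-1) - T 1 : R)) • dotted ⟨{(1, 2)}, by decide⟩ +
    (T (-1) : R) • dotted ⟨{(0, 2)}, by decide⟩ +
    (T 1 : R) • dotted ⟨{(1, 3)}, by decide⟩ -
    (T 1 : R) • dotted ⟨(∅ : Finset (Fin 4 × Fin 4)), by decide⟩

/-- Embedding of the points of the bottom diagram into the glued point set `Fin 6`:
`0,1` are the outer bottom points, `2,3` the glued points (top-right and top-left of the
bottom diagram). -/
def emb1 : Fin 4 → Fin 6 := ![0, 1, 2, 3]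

/-- Embedding of the points of the top diagram into the glued point set `Fin 6`:
its bottom-left `1′` is glued to point `4` of the first diagram (vertex `3`), its
bottom-right `2′` to point `3` of the first (vertex `2`), and its top points `3′,4′` are the
outer vertices `4, 5`. -/
def emb2 : Fin 4 → Fin 6 := ![3, 2, 4, 5]

/-- The outer points `1, 2, 3′, 4′` of the glued diagram, relabeled `0,1,2,3`. -/
def outer4 : Fin 4 → Fin 6 := ![0, 1, 4, 5]

/-- The edges of the glued graph: the chords of `M` and the chords of `N`, drawn on the
common point set. -/
def glueEdges (M N : NCPM 4) : Finset (Fin 6 × Fin 6) :=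
  M.1.image (fun p => (emb1 p.1, emb1 p.2)) ∪ N.1.image fun p => (emb2 p.1, emb2 p.2)

open scoped Classical in
/-- The matching on the outer points (relabeled `0,1,2,3`) whose chords are the pairs of
outer points joined by a path in the glued graph. -/
noncomputable def outerMatch (M N : NCPM 4) : Finset (Fin 4 × Fin 4) :=
  Finset.univ.filter fun p : Fin 4 × Fin 4 =>
    p.1 < p.2 ∧ Conn (glueEdges M N) (outer4 p.1) (outer4 p.2)

open scoped Classical in
/-- Stacking of basis diagrams: `0` if the glued graph contains a cycle (a closed loop), and
otherwise the basis diagram of the induced matching on the outer points. -/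
noncomputable def stackBase (M N : NCPM 4) : Pn 4 :=
  if HasCycleE (glueEdges M N) then 0
  else ∑ K : NCPM 4, if K.1 = outerMatch M N then e K else 0

/-- The bilinear stacking map `m : P₄ × P₄ → P₄` (second diagram on top of the first). -/
noncomputable def stack (x y : Pn 4) : Pn 4 :=
  ∑ M ∈ x.support, ∑ N ∈ y.support, (x M * y N) • stackBase M N


-- ===================== auxiliary infrastructure =====================

section ConnDec

variable {V : Type*} [DecidableEq V] [Fintype V]

/-- The simple graph of the symmetrized edge set. -/
def connGraph (E : Finset (V × V)) : SimpleGraph V :=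
  SimpleGraph.fromRel fun x y => (x, y) ∈ E

instance (E : Finset (V × V)) : DecidableRel (connGraph E).Adj := fun a b =>
  decidable_of_iff (a ≠ b ∧ ((a, b) ∈ E ∨ (b, a) ∈ E)) Iff.rfl

theorem conn_iff_reachable (E : Finset (V × V)) (x y : V) :
    Conn E x y ↔ (connGraph E).Reachable x y := by
  constructor
  · intro h
    induction h with
    | refl => rfl
    | tail _ hbc ih =>
      rename_i b c _
      rcases eq_or_ne b c with rfl | hne
      · exact ih
      · exact ih.trans (SimpleGraph.Adj.reachable (by
          rcases hbc with h | h
          · exact ⟨hne, Or.inl h⟩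
          · exact ⟨hne, Or.inr h⟩))
  · intro h
    rw [SimpleGraph.reachable_iff_reflTransGen] at h
    exact Relation.ReflTransGen.mono (fun a b hab => by
      rcases hab with ⟨_, h | h⟩
      · exact Or.inl h
      · exact Or.inr h) _ _ h

instance (E : Finset (V × V)) (x y : V) : Decidable (Conn E x y) :=
  decidable_of_iff _ (conn_iff_reachable E x y).symm

instance (E : Finset (V × V)) : Decidable (HasCycleE E) :=
  decidable_of_iff (∃ F ∈ E.powerset, F.Nonempty ∧
      ∀ v ∈ matchedSet F, 2 ≤ (F.filter fun p => p.1 = v ∨ p.2 = v).card)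
    (by simp [HasCycleE, Finset.mem_powerset])

end ConnDec

theorem outerMatch_eq (M N : NCPM 4) :
    outerMatch M N = Finset.univ.filter (fun p : Fin 4 × Fin 4 =>
      p.1 < p.2 ∧ Conn (glueEdges M N) (outer4 p.1) (outer4 p.2)) :=
  Finset.filter_congr_decidable _ _ _

theorem stackBase_eq (M N K : NCPM 4) (h1 : ¬HasCycleE (glueEdges M N))
    (h2 : Finset.univ.filter (fun p : Fin 4 × Fin 4 =>
      p.1 < p.2 ∧ Conn (glueEdges M N) (outer4 p.1) (outer4 p.2)) = K.1) :
    stackBase M N = e K := by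
  rw [stackBase, if_neg h1]
  have h : outerMatch M N = K.1 := (outerMatch_eq M N).trans h2
  have hiff : ∀ K' : NCPM 4, (K'.1 = outerMatch M N) ↔ (K' = K) := by
    intro K'; rw [h, ← Subtype.ext_iff]
  calc (∑ K' : NCPM 4, if K'.1 = outerMatch M N then e K' else 0)
      = ∑ K' : NCPM 4, if K' = K then e K' else 0 :=
        Finset.sum_congr rfl fun K' _ => if_congr (hiff K') rfl rfl
    _ = e K := by rw [Finset.sum_ite_eq' Finset.univ K e, if_pos (Finset.mem_univ K)]

-- the six basis matchings
abbrev mB : NCPM 4 := ⟨{(0, 3), (1, 2)}, by decide⟩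
abbrev mA : NCPM 4 := ⟨{(0, 3)}, by decide⟩
abbrev mC : NCPM 4 := ⟨{(1, 2)}, by decide⟩
abbrev mD : NCPM 4 := ⟨{(1, 3)}, by decide⟩
abbrev mE : NCPM 4 := ⟨{(0, 2)}, by decide⟩
abbrev mO : NCPM 4 := ⟨(∅ : Finset (Fin 4 × Fin 4)), by decide⟩

-- ===================== bilinearity of stacking =====================

noncomputable def sb2 (M : NCPM 4) : Pn 4 →ₗ[R] Pn 4 :=
  Finsupp.lsum R fun N => LinearMap.toSpanSingleton R (Pn 4) (stackBase M N)

noncomputable def sbL : Pn 4 →ₗ[R] Pn 4 →ₗ[R] Pn 4 :=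
  Finsupp.lsum R fun M => LinearMap.toSpanSingleton R (Pn 4 →ₗ[R] Pn 4) (sb2 M)

theorem stack_eq_sbL (x y : Pn 4) : stack x y = sbL x y := by
  rw [stack, sbL, Finsupp.lsum_apply]
  rw [Finsupp.sum, LinearMap.coe_sum, Finset.sum_apply]
  refine Finset.sum_congr rfl fun M _ => ?_
  rw [LinearMap.toSpanSingleton_apply, LinearMap.smul_apply, sb2, Finsupp.lsum_apply,
    Finsupp.sum, Finset.smul_sum]
  refine Finset.sum_congr rfl fun N _ => ?_
  rw [LinearMap.toSpanSingleton_apply, smul_smul]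

theorem sbL_e_e (M N : NCPM 4) : sbL (e M) (e N) = stackBase M N := by
  rw [e, sbL, Finsupp.lsum_single, LinearMap.toSpanSingleton_apply, one_smul, sb2, e,
    Finsupp.lsum_single, LinearMap.toSpanSingleton_apply, one_smul]

-- ===================== dotted elements in the e-basis =====================

noncomputable def eS {n : ℕ} (A : Finset (Fin n × Fin n)) : Pn n :=
  if h : IsNCPM n A then e ⟨A, h⟩ else 0

theorem eS_eq {A : Finset (Fin 4 × Fin 4)} (h : IsNCPM 4 A) : eS A = e ⟨A, h⟩ := dif_pos h

theorem dotted_eq {n : ℕ} (M : NCPM n) :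
    dotted M = ∑ A ∈ M.1.powerset, ((-1 : R) ^ (M.1.card - A.card)) • eS A := by
  rw [dotted, ← Finset.sum_attach M.1.powerset
    (fun A => ((-1 : R) ^ (M.1.card - A.card)) • eS A)]
  refine Finset.sum_congr rfl fun A _ => ?_
  rw [eS, dif_pos (M.2.subset (Finset.mem_powerset.mp A.2))]

theorem dotted_B : dotted mB = e mB - e mA - e mC + e mO := by
  rw [dotted_eq]
  rw [show (mB.1.powerset : Finset (Finset (Fin 4 × Fin 4))) =
    {∅, {(0,3)}, {(1,2)}, {(0,3),(1,2)}} from by decide]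
  rw [Finset.sum_insert (by decide), Finset.sum_insert (by decide),
    Finset.sum_insert (by decide), Finset.sum_singleton,
    eS_eq (by decide), eS_eq (by decide), eS_eq (by decide), eS_eq (by decide)]
  norm_num
  module

theorem dotted_A : dotted mA = e mA - e mO := by
  rw [dotted_eq]
  rw [show (mA.1.powerset : Finset (Finset (Fin 4 × Fin 4))) = {∅, {(0,3)}} from by decide]
  rw [Finset.sum_insert (by decide), Finset.sum_singleton,
    eS_eq (by decide), eS_eq (by decide)]
  norm_num
  module

theorem dotted_C : dotted mC = e mC - e mO := by
  rw [dotted_eq]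
  rw [show (mC.1.powerset : Finset (Finset (Fin 4 × Fin 4))) = {∅, {(1,2)}} from by decide]
  rw [Finset.sum_insert (by decide), Finset.sum_singleton,
    eS_eq (by decide), eS_eq (by decide)]
  norm_num
  module

theorem dotted_D : dotted mD = e mD - e mO := by
  rw [dotted_eq]
  rw [show (mD.1.powerset : Finset (Finset (Fin 4 × Fin 4))) = {∅, {(1,3)}} from by decide]
  rw [Finset.sum_insert (by decide), Finset.sum_singleton,
    eS_eq (by decide), eS_eq (by decide)]
  norm_num
  module

theorem dotted_E : dotted mE = e mE - e mO := by
  rw [dotted_eq]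
  rw [show (mE.1.powerset : Finset (Finset (Fin 4 × Fin 4))) = {∅, {(0,2)}} from by decide]
  rw [Finset.sum_insert (by decide), Finset.sum_singleton,
    eS_eq (by decide), eS_eq (by decide)]
  norm_num
  module

theorem dotted_O : dotted mO = e mO := by
  rw [dotted_eq]
  rw [show (mO.1.powerset : Finset (Finset (Fin 4 × Fin 4))) = {∅} from by decide]
  rw [Finset.sum_singleton, eS_eq (by decide)]
  norm_num

theorem Xpos_eq : Xpos = (T 1 : R) • e mB - (T (-1) : R) • e mA - (T 1 : R) • e mC +
    (T 1 : R) • e mD + (T (-1) : R) • e mE - ((T 1 : R) + T (-1)) • e mO := by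
  rw [Xpos]
  rw [show (⟨{(0, 3), (1, 2)}, by decide⟩ : NCPM 4) = mB from rfl,
    show (⟨{(0, 3)}, by decide⟩ : NCPM 4) = mA from rfl,
    show (⟨{(1, 3)}, by decide⟩ : NCPM 4) = mD from rfl,
    show (⟨{(0, 2)}, by decide⟩ : NCPM 4) = mE from rfl,
    show (⟨(∅ : Finset (Fin 4 × Fin 4)), by decide⟩ : NCPM 4) = mO from rfl,
    dotted_B, dotted_A, dotted_D, dotted_E, dotted_O]
  module

theorem Xneg_eq : Xneg = (T (-1) : R) • e mB - (T (-1) : R) • e mA - (T 1 : R) • e mC +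
    (T 1 : R) • e mD + (T (-1) : R) • e mE - ((T 1 : R) + T (-1)) • e mO := by
  rw [Xneg]
  rw [show (⟨{(0, 3), (1, 2)}, by decide⟩ : NCPM 4) = mB from rfl,
    show (⟨{(1, 2)}, by decide⟩ : NCPM 4) = mC from rfl,
    show (⟨{(1, 3)}, by decide⟩ : NCPM 4) = mD from rfl,
    show (⟨{(0, 2)}, by decide⟩ : NCPM 4) = mE from rfl,
    show (⟨(∅ : Finset (Fin 4 × Fin 4)), by decide⟩ : NCPM 4) = mO from rfl,
    dotted_B, dotted_C, dotted_D, dotted_E, dotted_O]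
  module

-- ===================== the 36 products of basis diagrams =====================

theorem sb_BB : stackBase mB mB = e mB :=
  stackBase_eq _ _ _ (by decide) (by decide)

theorem sb_BA : stackBase mB mA = e mA :=
  stackBase_eq _ _ _ (by decide) (by decide)

theorem sb_BC : stackBase mB mC = e mC :=
  stackBase_eq _ _ _ (by decide) (by decide)

theorem sb_BD : stackBase mB mD = e mD :=
  stackBase_eq _ _ _ (by decide) (by decide)

theorem sb_BE : stackBase mB mE = e mE :=
  stackBase_eq _ _ _ (by decide) (by decide)

theorem sb_BO : stackBase mB mO = e mO :=
  stackBase_eq _ _ _ (by decide) (by decide)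

theorem sb_AB : stackBase mA mB = e mA :=
  stackBase_eq _ _ _ (by decide) (by decide)

theorem sb_AA : stackBase mA mA = e mA :=
  stackBase_eq _ _ _ (by decide) (by decide)

theorem sb_AC : stackBase mA mC = e mO :=
  stackBase_eq _ _ _ (by decide) (by decide)

theorem sb_AD : stackBase mA mD = e mO :=
  stackBase_eq _ _ _ (by decide) (by decide)

theorem sb_AE : stackBase mA mE = e mE :=
  stackBase_eq _ _ _ (by decide) (by decide)

theorem sb_AO : stackBase mA mO = e mO :=
  stackBase_eq _ _ _ (by decide) (by decide)

theorem sb_CB : stackBase mC mB = e mC :=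
  stackBase_eq _ _ _ (by decide) (by decide)

theorem sb_CA : stackBase mC mA = e mO :=
  stackBase_eq _ _ _ (by decide) (by decide)

theorem sb_CC : stackBase mC mC = e mC :=
  stackBase_eq _ _ _ (by decide) (by decide)

theorem sb_CD : stackBase mC mD = e mD :=
  stackBase_eq _ _ _ (by decide) (by decide)

theorem sb_CE : stackBase mC mE = e mO :=
  stackBase_eq _ _ _ (by decide) (by decide)

theorem sb_CO : stackBase mC mO = e mO :=
  stackBase_eq _ _ _ (by decide) (by decide)

theorem sb_DB : stackBase mD mB = e mD :=
  stackBase_eq _ _ _ (by decide) (by decide)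

theorem sb_DA : stackBase mD mA = e mD :=
  stackBase_eq _ _ _ (by decide) (by decide)

theorem sb_DC : stackBase mD mC = e mO :=
  stackBase_eq _ _ _ (by decide) (by decide)

theorem sb_DD : stackBase mD mD = e mO :=
  stackBase_eq _ _ _ (by decide) (by decide)

theorem sb_DE : stackBase mD mE = e mC :=
  stackBase_eq _ _ _ (by decide) (by decide)

theorem sb_DO : stackBase mD mO = e mO :=
  stackBase_eq _ _ _ (by decide) (by decide)

theorem sb_EB : stackBase mE mB = e mE :=
  stackBase_eq _ _ _ (by decide) (by decide)

theorem sb_EA : stackBase mE mA = e mO :=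
  stackBase_eq _ _ _ (by decide) (by decide)

theorem sb_EC : stackBase mE mC = e mE :=
  stackBase_eq _ _ _ (by decide) (by decide)

theorem sb_ED : stackBase mE mD = e mA :=
  stackBase_eq _ _ _ (by decide) (by decide)

theorem sb_EE : stackBase mE mE = e mO :=
  stackBase_eq _ _ _ (by decide) (by decide)

theorem sb_EO : stackBase mE mO = e mO :=
  stackBase_eq _ _ _ (by decide) (by decide)

theorem sb_OB : stackBase mO mB = e mO :=
  stackBase_eq _ _ _ (by decide) (by decide)

theorem sb_OA : stackBase mO mA = e mO :=
  stackBase_eq _ _ _ (by decide) (by decide)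

theorem sb_OC : stackBase mO mC = e mO :=
  stackBase_eq _ _ _ (by decide) (by decide)

theorem sb_OD : stackBase mO mD = e mO :=
  stackBase_eq _ _ _ (by decide) (by decide)

theorem sb_OE : stackBase mO mE = e mO :=
  stackBase_eq _ _ _ (by decide) (by decide)

theorem sb_OO : stackBase mO mO = e mO :=
  stackBase_eq _ _ _ (by decide) (by decide)

theorem T_mul_T (a b : ℤ) : (T a : R) * T b = T (a + b) := (T_add a b).symm


set_option maxHeartbeats 1600000 in
/-- Reidemeister II: `m(X₊, X₋) = m(X₋, X₊) = e_{{1,4},{2,3}}`, the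
identity diagram of two parallel strands joining `1` to `4` and `2` to `3`
(0-indexed: `e_{{03},{12}}`). -/
theorem reidemeister_two :
    stack Xpos Xneg = e (⟨{(0, 3), (1, 2)}, by decide⟩ : NCPM 4) ∧
      stack Xneg Xpos = e (⟨{(0, 3), (1, 2)}, by decide⟩ : NCPM 4) := by
  constructor
  · rw [stack_eq_sbL, Xpos_eq, Xneg_eq]
    simp only [map_add, map_sub, map_smul, LinearMap.add_apply, LinearMap.sub_apply,
      LinearMap.smul_apply, sbL_e_e,
      sb_BB, sb_BA, sb_BC, sb_BD, sb_BE, sb_BO,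
      sb_AB, sb_AA, sb_AC, sb_AD, sb_AE, sb_AO,
      sb_CB, sb_CA, sb_CC, sb_CD, sb_CE, sb_CO,
      sb_DB, sb_DA, sb_DC, sb_DD, sb_DE, sb_DO,
      sb_EB, sb_EA, sb_EC, sb_ED, sb_EE, sb_EO,
      sb_OB, sb_OA, sb_OC, sb_OD, sb_OE, sb_OO,
      smul_add, smul_sub, smul_smul, add_mul, mul_add, sub_mul, mul_sub, T_mul_T]
    simp only [show ((1:ℤ) + -1) = 0 from by norm_num, show ((-1:ℤ) + 1) = 0 from by norm_num,
      T_zero, one_smul]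
    module
  · rw [stack_eq_sbL, Xneg_eq, Xpos_eq]
    simp only [map_add, map_sub, map_smul, LinearMap.add_apply, LinearMap.sub_apply,
      LinearMap.smul_apply, sbL_e_e,
      sb_BB, sb_BA, sb_BC, sb_BD, sb_BE, sb_BO,
      sb_AB, sb_AA, sb_AC, sb_AD, sb_AE, sb_AO,
      sb_CB, sb_CA, sb_CC, sb_CD, sb_CE, sb_CO,
      sb_DB, sb_DA, sb_DC, sb_DD, sb_DE, sb_DO,
      sb_EB, sb_EA, sb_EC, sb_ED, sb_EE, sb_EO,
      sb_OB, sb_OA, sb_OC, sb_OD, sb_OE, sb_OO,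
      smul_add, smul_sub, smul_smul, add_mul, mul_add, sub_mul, mul_sub, T_mul_T]
    simp only [show ((1:ℤ) + -1) = 0 from by norm_num, show ((-1:ℤ) + 1) = 0 from by norm_num,
      T_zero, one_smul]
    module
end
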